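/- arXiv:1911.10541 — 10 statements merged into one kernel-verified Lean document; each statement's English description precedes it below -/
import Mathlib

section
/- Let H be a hypothesis class on X, let n' ≤ n be positive integers, η > 0, ε ∈ (0, 1/2], α ∈ (0,1), and let φ (a map from datasets of size n to randomized binary predictors) have 1/(ηn)-differentially-private prediction, with 1/(ηn) ≤ ε and n' ≤ εn. Let S = ((x_i,y_i))_{i=1}^n and S' be neighboring datasets of size n that differ exactly in their first entry. Assume that the number of subsets I ⊆ [n] with |I| = n' and 1 ∈ I such that the sequence (x_j)_{j ∈ I∖{1}} is NOT an η-net for H with respect to the uniform distribution on (x_2,…,x_n) is at most α·(n−1 choose n'−1). Then there is a universal constant C > 0 such that h_S ⪯ (1 + Cε)·e^{3ε}·h_{S'} + Cεα, where the same fixed choice of pattern classes (depending only on the sequence of points) is used for both datasets. -/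
open Finset MeasureTheory
open scoped Classical

variable {X : Type*}

/-- Two datasets of size `n` are neighboring: they differ in exactly one entry. -/
def Neighboring {n : ℕ} (S S' : Fin n → X × Bool) : Prop :=
  ∃ i, S i ≠ S' i ∧ ∀ j, j ≠ i → S j = S' j

/-- `H` shatters the finite set `C`: every Boolean function on `C` is the restriction of
some member of `H`. -/
def Shatters (H : Set (X → Bool)) (C : Finset X) : Prop :=
  ∀ f : X → Bool, ∃ h ∈ H, ∀ x ∈ C, h x = f x

/-- The VC dimension of `H` is at most `d`. -/
def VCDimLE (H : Set (X → Bool)) (d : ℕ) : Prop :=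
  ∀ C : Finset X, Shatters H C → C.card ≤ d

/-- Empirical 0-1 loss of a hypothesis `h` on a dataset `S` of size `n`. -/
noncomputable def empLoss {n : ℕ} (S : Fin n → X × Bool) (h : X → Bool) : ℝ :=
  ((univ.filter fun i => h (S i).1 ≠ (S i).2).card : ℝ) / n

/-- Population 0-1 loss of a hypothesis `h` under a distribution `D` on `X × Bool`. -/
noncomputable def popLoss [MeasurableSpace X] (D : Measure (X × Bool)) (h : X → Bool) : ℝ :=
  (D {z | h z.1 ≠ z.2}).toReal

/-- Population loss of a randomized binary predictor `p : X → [0,1]` under `D`: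
the probability (over `(x,y) ~ D` and the randomness of the prediction) of a mistake. -/
noncomputable def predPopLoss [MeasurableSpace X] (D : Measure (X × Bool)) (p : X → ℝ) : ℝ :=
  ∫ z, |p z.1 - (if z.2 then (1 : ℝ) else 0)| ∂D

/-- A map `φ` from datasets to randomized binary predictors (given as the probability of
outputting label 1) has `κ`-differentially-private prediction. -/
def PrivatePrediction {n : ℕ} (κ : ℝ) (φ : (Fin n → X × Bool) → X → ℝ) : Prop :=
  ∀ S S' : Fin n → X × Bool, Neighboring S S' → ∀ x,
    φ S x ≤ Real.exp κ * φ S' x ∧ 1 - φ S x ≤ Real.exp κ * (1 - φ S' x)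

/-- `F` is a pattern class of `H` on the points `(xs i)_{i ∈ I}`: a finite subset of `H`
containing exactly one hypothesis for each distinct restriction pattern. -/
def IsPatternClass (H : Set (X → Bool)) {n : ℕ} (xs : Fin n → X)
    (I : Finset (Fin n)) (F : Finset (X → Bool)) : Prop :=
  (∀ f ∈ F, f ∈ H) ∧
  (∀ h ∈ H, ∃ f ∈ F, ∀ i ∈ I, f (xs i) = h (xs i)) ∧
  (∀ f ∈ F, ∀ g ∈ F, (∀ i ∈ I, f (xs i) = g (xs i)) → f = g)

/-- `F` is a pattern class of `H` on the finite sequence `T`. -/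
def IsPatternClassSeq (H : Set (X → Bool)) {m : ℕ} (T : Fin m → X)
    (F : Finset (X → Bool)) : Prop :=
  (∀ f ∈ F, f ∈ H) ∧
  (∀ h ∈ H, ∃ f ∈ F, ∀ j, f (T j) = h (T j)) ∧
  (∀ f ∈ F, ∀ g ∈ F, (∀ j, f (T j) = g (T j)) → f = g)

/-- The points `(xs j)_{j ∈ J}` form an `η`-net for `H` with respect to the uniform
distribution on `(xs 1, …, xs (n-1))` (i.e. on all points except the first): any two
hypotheses of `H` that agree on `J` disagree on at most an `η`-fraction of those points. -/
def IsNetOn (H : Set (X → Bool)) {n : ℕ} (xs : Fin n → X) (J : Finset (Fin n)) (η : ℝ) : Prop :=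
  ∀ h ∈ H, ∀ g ∈ H, (∀ j ∈ J, h (xs j) = g (xs j)) →
    ((univ.filter fun i : Fin n => i.val ≠ 0 ∧ h (xs i) ≠ g (xs i)).card : ℝ) ≤ η * (n - 1)

/-- The sequence `T` is an `η`-net for `H` with respect to the uniform distribution
on `(xs 1, …, xs (n-1))` (all points of the dataset except the first). -/
def IsNetSeqTail (H : Set (X → Bool)) {n m : ℕ} (xs : Fin n → X) (T : Fin m → X)
    (η : ℝ) : Prop :=
  ∀ h ∈ H, ∀ g ∈ H, (∀ j, h (T j) = g (T j)) →
    ((univ.filter fun i : Fin n => i.val ≠ 0 ∧ h (xs i) ≠ g (xs i)).card : ℝ) ≤ η * (n - 1)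

/-- The sequence `T` is an `α`-net for `H` with respect to the uniform distribution
on `(xs 0, …, xs (n-1))` (all points of the dataset). -/
def IsNetSeqAll (H : Set (X → Bool)) {n m : ℕ} (xs : Fin n → X) (T : Fin m → X)
    (α : ℝ) : Prop :=
  ∀ h ∈ H, ∀ g ∈ H, (∀ j, h (T j) = g (T j)) →
    ((univ.filter fun i : Fin n => h (xs i) ≠ g (xs i)).card : ℝ) ≤ α * n

/-- The exponential-weights predictor `h_{S,F}`: the mixture of the predictors
`φ_S(h) = φ(S_h)` for `h ∈ F`, with weights `exp(-L_S(h)/η)`. -/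
noncomputable def expPred {n : ℕ} (η : ℝ) (φ : (Fin n → X × Bool) → X → ℝ)
    (S : Fin n → X × Bool) (F : Finset (X → Bool)) (x : X) : ℝ :=
  (∑ h ∈ F, Real.exp (-(empLoss S h) / η) * φ (fun i => ((S i).1, h ((S i).1))) x) /
    (∑ h ∈ F, Real.exp (-(empLoss S h) / η))

/-- The final predictor `h_S`: the average of `h_{S,S_I}` over all subsets `I ⊆ [n]` of
size `n'`, where the pattern class used for `I` is `Pat I`. -/
noncomputable def avgPred {n : ℕ} (n' : ℕ) (η : ℝ) (φ : (Fin n → X × Bool) → X → ℝ)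
    (S : Fin n → X × Bool) (Pat : Finset (Fin n) → Finset (X → Bool)) (x : X) : ℝ :=
  (∑ I ∈ (univ : Finset (Fin n)).powersetCard n', expPred η φ S (Pat I) x) /
    (n.choose n' : ℝ)

/-- Group privacy (one-sided). -/
lemma aux_group_priv {n : ℕ} {κ : ℝ} (hκ : 0 ≤ κ) (ψ : (Fin n → X × Bool) → X → ℝ)
    (hnn : ∀ T x, 0 ≤ ψ T x)
    (hpriv : ∀ T T', Neighboring T T' → ∀ x, ψ T x ≤ Real.exp κ * ψ T' x) :
    ∀ (d : ℕ) (T T' : Fin n → X × Bool) (x : X),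
      ((univ.filter fun i => T i ≠ T' i).card ≤ d) →
      ψ T x ≤ Real.exp (d * κ) * ψ T' x := by
  intro d
  induction d with
  | zero =>
    intro T T' x hc
    have : (univ.filter fun i => T i ≠ T' i) = ∅ := by
      apply Finset.card_eq_zero.mp; omega
    have hTT : T = T' := by
      funext i
      by_contra hne
      have hmem : i ∈ (univ.filter fun i => T i ≠ T' i) := by simp [hne]
      rw [this] at hmem
      exact absurd hmem (by simp)
    subst hTT
    simp [Real.exp_nonneg, hnn]
  | succ d ih =>
    intro T T' x hc
    by_cases hemp : (univ.filter fun i => T i ≠ T' i) = ∅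
    · have hTT : T = T' := by
        funext i
        by_contra hne
        exact absurd (hemp ▸ (by simp [hne] : i ∈ (univ.filter fun i => T i ≠ T' i))) (by simp)
      subst hTT
      have h1 : (1:ℝ) ≤ Real.exp ((d+1 : ℕ) * κ) := by
        rw [Real.one_le_exp_iff] <;> positivity
      nlinarith [hnn T x, h1]
    · obtain ⟨i, hi⟩ := Finset.nonempty_iff_ne_empty.mpr hemp
      have hiT : T i ≠ T' i := (Finset.mem_filter.mp hi).2
      set T'' := Function.update T i (T' i) with hT''
      have hnb : Neighboring T T'' := by
        refine ⟨i, ?_, ?_⟩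
        · simp [hT'', Function.update_self]; exact hiT
        · intro j hj; simp [hT'', Function.update_of_ne hj]
      have hsub : (univ.filter fun j => T'' j ≠ T' j) ⊆
          (univ.filter fun j => T j ≠ T' j).erase i := by
        intro j hj
        have hj2 := (Finset.mem_filter.mp hj).2
        have hji : j ≠ i := by
          intro hji; subst hji; simp [hT'', Function.update_self] at hj2
        refine Finset.mem_erase.mpr ⟨hji, ?_⟩
        simp only [Finset.mem_filter, Finset.mem_univ, true_and]
        rwa [hT'', Function.update_of_ne hji] at hj2
      have hcard : (univ.filter fun j => T'' j ≠ T' j).card ≤ d := by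
        have := Finset.card_le_card hsub
        have h2 := Finset.card_erase_of_mem hi
        omega
      calc ψ T x ≤ Real.exp κ * ψ T'' x := hpriv T T'' hnb x
        _ ≤ Real.exp κ * (Real.exp (d * κ) * ψ T' x) := by
            have := ih T'' T' x hcard
            nlinarith [Real.exp_pos κ]
        _ = Real.exp ((d+1 : ℕ) * κ) * ψ T' x := by
            rw [← mul_assoc, ← Real.exp_add]
            congr 2
            push_cast
            ring

/-- Loss comparison: changing the first entry and flipping the hypothesis on the
disagreement set changes the empirical loss by at most `(card D + 1)/n`. -/
lemma aux_loss {n : ℕ} (hn : 0 < n) (S S' : Fin n → X × Bool)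
    (htail : ∀ j : Fin n, j.val ≠ 0 → S j = S' j) (h h' : X → Bool) :
    empLoss S' h' ≤ empLoss S h +
      (((univ.filter fun i : Fin n => i.val ≠ 0 ∧ h (S i).1 ≠ h' (S i).1).card : ℝ) + 1) / n := by
  set A := univ.filter fun i : Fin n => h' (S' i).1 ≠ (S' i).2 with hA
  set B := univ.filter fun i : Fin n => h (S i).1 ≠ (S i).2 with hB
  set D := univ.filter fun i : Fin n => i.val ≠ 0 ∧ h (S i).1 ≠ h' (S i).1 with hD
  have hsub : A ⊆ B ∪ D ∪ {(⟨0, hn⟩ : Fin n)} := by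
    intro i hi
    have hi2 := (Finset.mem_filter.mp hi).2
    by_cases h0 : i.val = 0
    · have : i = ⟨0, hn⟩ := Fin.ext h0
      simp [this]
    · have hSi := htail i h0
      by_cases hd : h (S i).1 = h' (S i).1
      · have : i ∈ B := by
          simp only [hB, Finset.mem_filter, Finset.mem_univ, true_and]
          rw [← hSi] at hi2
          rw [hd]; exact hi2
        simp [this]
      · have : i ∈ D := by simp [hD, h0, hd]
        simp [this]
  have hcard : (A.card : ℝ) ≤ (B.card : ℝ) + ((D.card : ℝ) + 1) := by
    have h1 : A.card ≤ B.card + D.card + 1 := by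
      calc A.card ≤ (B ∪ D ∪ {(⟨0, hn⟩ : Fin n)}).card := Finset.card_le_card hsub
        _ ≤ (B ∪ D).card + 1 := by
            have := Finset.card_union_le (B ∪ D) {(⟨0, hn⟩ : Fin n)}
            simpa using this
        _ ≤ B.card + D.card + 1 := by
            have := Finset.card_union_le B D; omega
    exact_mod_cast h1
  have hnpos : (0:ℝ) < n := by exact_mod_cast hn
  rw [empLoss, empLoss, ← add_div]
  exact div_le_div_of_nonneg_right hcard hnpos.le

/-- The two labeled datasets differ in at most `card D + 1` entries. -/
lemma aux_data_diff {n : ℕ} (hn : 0 < n) (S S' : Fin n → X × Bool)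
    (htail : ∀ j : Fin n, j.val ≠ 0 → S j = S' j) (h h' : X → Bool) :
    ((univ.filter fun i : Fin n =>
        (fun i => ((S i).1, h ((S i).1))) i ≠ (fun i => ((S' i).1, h' ((S' i).1))) i).card)
      ≤ (univ.filter fun i : Fin n => i.val ≠ 0 ∧ h (S i).1 ≠ h' (S i).1).card + 1 := by
  set D := univ.filter fun i : Fin n => i.val ≠ 0 ∧ h (S i).1 ≠ h' (S i).1 with hD
  have hsub : (univ.filter fun i : Fin n =>
      (fun i => ((S i).1, h ((S i).1))) i ≠ (fun i => ((S' i).1, h' ((S' i).1))) i)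
      ⊆ D ∪ {(⟨0, hn⟩ : Fin n)} := by
    intro i hi
    have hi2 := (Finset.mem_filter.mp hi).2
    by_cases h0 : i.val = 0
    · have : i = ⟨0, hn⟩ := Fin.ext h0
      simp [this]
    · have hSi := htail i h0
      have : i ∈ D := by
        simp only [hD, Finset.mem_filter, Finset.mem_univ, true_and]
        refine ⟨h0, ?_⟩
        intro hd
        apply hi2
        simp only [← hSi, hd]
      simp [this]
  calc _ ≤ (D ∪ {(⟨0, hn⟩ : Fin n)}).card := Finset.card_le_card hsub
    _ ≤ D.card + 1 := by simpa using Finset.card_union_le D {(⟨0, hn⟩ : Fin n)}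

/-- Fiberwise sum bound: if `σ` maps `A` into `B` with fibers of size ≤ `m` and
`f a ≤ c * g (σ a)`, then `∑_A f ≤ m * c * ∑_B g`. -/
lemma aux_fiber_sum {γ δ : Type*} (A : Finset γ) (B : Finset δ) (σ : γ → δ) (f : γ → ℝ) (g : δ → ℝ)
    (c : ℝ) (hc : 0 ≤ c) (m : ℕ)
    (hmaps : ∀ a ∈ A, σ a ∈ B) (hg : ∀ b ∈ B, 0 ≤ g b)
    (hfg : ∀ a ∈ A, f a ≤ c * g (σ a))
    (hmult : ∀ b ∈ B, (A.filter fun a => σ a = b).card ≤ m) :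
    ∑ a ∈ A, f a ≤ m * c * ∑ b ∈ B, g b := by
  have h1 : ∑ a ∈ A, f a ≤ ∑ a ∈ A, c * g (σ a) := Finset.sum_le_sum hfg
  have h2 : ∑ a ∈ A, c * g (σ a) = ∑ b ∈ B, ∑ a ∈ A.filter (fun a => σ a = b), c * g (σ a) :=
    (Finset.sum_fiberwise_of_maps_to hmaps _).symm
  have h3 : ∀ b ∈ B, ∑ a ∈ A.filter (fun a => σ a = b), c * g (σ a) ≤ m * (c * g b) := by
    intro b hb
    have : ∀ a ∈ A.filter (fun a => σ a = b), c * g (σ a) = c * g b := by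
      intro a ha
      rw [(Finset.mem_filter.mp ha).2]
    rw [Finset.sum_congr rfl this, Finset.sum_const, nsmul_eq_mul]
    have hcg : 0 ≤ c * g b := mul_nonneg hc (hg b hb)
    have := hmult b hb
    have : ((A.filter fun a => σ a = b).card : ℝ) ≤ (m : ℝ) := by exact_mod_cast this
    nlinarith
  calc ∑ a ∈ A, f a ≤ ∑ b ∈ B, ∑ a ∈ A.filter (fun a => σ a = b), c * g (σ a) := h2 ▸ h1
    _ ≤ ∑ b ∈ B, (m : ℝ) * (c * g b) := Finset.sum_le_sum h3
    _ = m * c * ∑ b ∈ B, g b := by rw [← Finset.mul_sum, ← Finset.mul_sum]; ring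

/-- Ratio comparison. -/
lemma aux_ratio {γ : Type*} (F F' : Finset γ) (w w' a a' : γ → ℝ)
    (hF : F.Nonempty) (hF' : F'.Nonempty)
    (hw : ∀ h, 0 < w h) (hw' : ∀ h, 0 < w' h)
    (ha' : ∀ h, 0 ≤ a' h) (cN cD : ℝ) (hcN : 0 ≤ cN) (hcD : 0 ≤ cD)
    (hnum : ∑ h ∈ F, w h * a h ≤ cN * ∑ h ∈ F', w' h * a' h)
    (hden : ∑ h ∈ F', w' h ≤ cD * ∑ h ∈ F, w h) :
    (∑ h ∈ F, w h * a h) / (∑ h ∈ F, w h) ≤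
      cN * cD * ((∑ h ∈ F', w' h * a' h) / (∑ h ∈ F', w' h)) := by
  have hP : (0:ℝ) < ∑ h ∈ F, w h := Finset.sum_pos (fun h _ => hw h) hF
  have hP' : (0:ℝ) < ∑ h ∈ F', w' h := Finset.sum_pos (fun h _ => hw' h) hF'
  have hQ' : (0:ℝ) ≤ ∑ h ∈ F', w' h * a' h :=
    Finset.sum_nonneg fun h _ => mul_nonneg (hw' h).le (ha' h)
  rw [div_le_iff₀ hP]
  calc ∑ h ∈ F, w h * a h ≤ cN * ∑ h ∈ F', w' h * a' h := hnum
    _ ≤ cN * cD * ((∑ h ∈ F', w' h * a' h) / (∑ h ∈ F', w' h)) * ∑ h ∈ F, w h := by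
        rw [show cN * cD * ((∑ h ∈ F', w' h * a' h) / (∑ h ∈ F', w' h)) * ∑ h ∈ F, w h
            = (cN * cD * (∑ h ∈ F', w' h * a' h) * ∑ h ∈ F, w h) / (∑ h ∈ F', w' h) by ring,
          le_div_iff₀ hP']
        nlinarith [mul_le_mul_of_nonneg_left hden (mul_nonneg hcN hQ')]

/-- flipping roles in the disagreement filter. -/
lemma aux_filter_flip {n : ℕ} (S S' : Fin n → X × Bool)
    (htail : ∀ j : Fin n, j.val ≠ 0 → S j = S' j) (h g : X → Bool) :
    (univ.filter fun i : Fin n => i.val ≠ 0 ∧ g (S' i).1 ≠ h (S' i).1) =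
    (univ.filter fun i : Fin n => i.val ≠ 0 ∧ h (S i).1 ≠ g (S i).1) := by
  apply Finset.filter_congr
  intro i _
  by_cases h0 : i.val = 0
  · constructor
    · rintro ⟨a, -⟩; exact absurd h0 a
    · rintro ⟨a, -⟩; exact absurd h0 a
  · have hs : S i = S' i := htail i h0
    rw [← hs]
    exact ⟨fun p => ⟨p.1, p.2.symm⟩, fun p => ⟨p.1, p.2.symm⟩⟩

/-- Per-pair bound: weight and prediction of `h` on `S` are bounded by those of `h'` on
`S'` up to factor `e²`, provided `h, h'` disagree on few tail points. -/
lemma aux_pair {n : ℕ} (hn : 0 < n) {η ε : ℝ} (hη : 0 < η) (hε2 : ε ≤ 1/2)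
    (hκε : 1/(η * n) ≤ ε)
    (ψ : (Fin n → X × Bool) → X → ℝ) (hψ01 : ∀ T x, ψ T x ∈ Set.Icc (0:ℝ) 1)
    (hpriv : ∀ T T', Neighboring T T' → ∀ x, ψ T x ≤ Real.exp (1/(η*n)) * ψ T' x)
    (S S' : Fin n → X × Bool) (htail : ∀ j : Fin n, j.val ≠ 0 → S j = S' j)
    (h h' : X → Bool)
    (hD : ((univ.filter fun i : Fin n => i.val ≠ 0 ∧ h (S i).1 ≠ h' (S i).1).card : ℝ)
      ≤ η * (n-1))
    (x : X) :
    Real.exp (-(empLoss S h) / η) ≤ Real.exp 2 * Real.exp (-(empLoss S' h') / η) ∧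
    ψ (fun i => ((S i).1, h ((S i).1))) x
      ≤ Real.exp 2 * ψ (fun i => ((S' i).1, h' ((S' i).1))) x := by
  have hnR : (0:ℝ) < n := by exact_mod_cast hn
  have hηn : (0:ℝ) < η * n := by positivity
  have hκ0 : (0:ℝ) ≤ 1/(η*n) := by positivity
  have hε : (0:ℝ) < ε := lt_of_lt_of_le (by positivity : (0:ℝ) < 1/(η*n)) hκε
  set cD : ℝ := ((univ.filter fun i : Fin n => i.val ≠ 0 ∧ h (S i).1 ≠ h' (S i).1).card : ℝ)
    with hcD
  have hcD0 : 0 ≤ cD := by positivity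
  -- key numeric bound
  have hεκ' : (1:ℝ) ≤ ε * (η * n) := (div_le_iff₀ hηn).mp hκε
  have hkey : (cD + 1) / (n * η) ≤ 2 := by
    rw [div_le_iff₀ (by positivity : (0:ℝ) < (n:ℝ) * η)]
    have hε : (0:ℝ) < ε := lt_of_lt_of_le (by positivity : (0:ℝ) < 1/(η*n)) hκε
    nlinarith [hD, hη, hnR, hηn]
  constructor
  · -- weights
    have hL := aux_loss hn S S' htail h h'
    rw [← hcD] at hL
    have hq : empLoss S' h' / η - empLoss S h / η ≤ 2 := by
      have hsub : empLoss S' h' - empLoss S h ≤ (cD + 1) / n := by linarith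
      calc empLoss S' h' / η - empLoss S h / η
          = (empLoss S' h' - empLoss S h) / η := (sub_div _ _ _).symm
        _ ≤ ((cD + 1) / n) / η := by gcongr
        _ = (cD + 1) / (n * η) := by rw [div_div]
        _ ≤ 2 := hkey
    rw [← Real.exp_add]
    apply Real.exp_le_exp.mpr
    rw [neg_div, neg_div]
    linarith
  · -- prediction
    have hd := aux_data_diff hn S S' htail h h'
    have hgp := aux_group_priv hκ0 ψ (fun T y => (hψ01 T y).1) hpriv
      ((univ.filter fun i : Fin n => i.val ≠ 0 ∧ h (S i).1 ≠ h' (S i).1).card + 1)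
      (fun i => ((S i).1, h ((S i).1))) (fun i => ((S' i).1, h' ((S' i).1))) x hd
    refine hgp.trans ?_
    apply mul_le_mul_of_nonneg_right _ (hψ01 _ x).1
    apply Real.exp_le_exp.mpr
    push_cast
    rw [← hcD, mul_one_div]
    calc (cD + 1) / (η * n) = (cD + 1) / (n * η) := by rw [mul_comm]
      _ ≤ 2 := hkey

noncomputable def EPred {n : ℕ} (η : ℝ) (ψ : (Fin n → X × Bool) → X → ℝ)
    (S : Fin n → X × Bool) (F : Finset (X → Bool)) (x : X) : ℝ :=
  (∑ h ∈ F, Real.exp (-(empLoss S h) / η) * ψ (fun i => ((S i).1, h ((S i).1))) x) /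
    (∑ h ∈ F, Real.exp (-(empLoss S h) / η))

lemma EPred_nonneg {n : ℕ} (η : ℝ) (ψ : (Fin n → X × Bool) → X → ℝ)
    (S : Fin n → X × Bool) (F : Finset (X → Bool)) (x : X)
    (hψ : ∀ T y, 0 ≤ ψ T y) : 0 ≤ EPred η ψ S F x := by
  apply div_nonneg
  · exact Finset.sum_nonneg fun h _ => mul_nonneg (Real.exp_nonneg _) (hψ _ x)
  · exact Finset.sum_nonneg fun h _ => Real.exp_nonneg _

lemma EPred_le_one {n : ℕ} (η : ℝ) (ψ : (Fin n → X × Bool) → X → ℝ)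
    (S : Fin n → X × Bool) (F : Finset (X → Bool)) (x : X)
    (hψ : ∀ T y, ψ T y ≤ 1) : EPred η ψ S F x ≤ 1 := by
  rcases F.eq_empty_or_nonempty with rfl | hF
  · simp [EPred]
  · rw [EPred, div_le_one (Finset.sum_pos (fun h _ => Real.exp_pos _) hF)]
    exact Finset.sum_le_sum fun h _ => by
      nlinarith [Real.exp_pos (-(empLoss S h) / η), hψ (fun i => ((S i).1, h ((S i).1))) x]

lemma EPred_one_sub {n : ℕ} (η : ℝ) (ψ : (Fin n → X × Bool) → X → ℝ)
    (S : Fin n → X × Bool) (F : Finset (X → Bool)) (x : X) (hF : F.Nonempty) :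
    1 - EPred η ψ S F x = EPred η (fun T y => 1 - ψ T y) S F x := by
  have hpos : (0:ℝ) < ∑ h ∈ F, Real.exp (-(empLoss S h) / η) :=
    Finset.sum_pos (fun h _ => Real.exp_pos _) hF
  rw [EPred, EPred, eq_div_iff hpos.ne', sub_mul, div_mul_cancel₀ _ hpos.ne', one_mul]
  rw [← Finset.sum_sub_distrib]
  · apply Finset.sum_congr rfl; intro h _; ring
/-- Easy case: the changed index is not in `I`, so the pattern class is the same and the
exponential-weights predictors are within `e^{3ε}`. -/
lemma compare_easy {n : ℕ} (hn : 0 < n) {η ε : ℝ} (hη : 0 < η) (hκε : 1/(η*n) ≤ ε)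
    (ψ : (Fin n → X × Bool) → X → ℝ) (hψ01 : ∀ T y, ψ T y ∈ Set.Icc (0:ℝ) 1)
    (hpriv : ∀ T T', Neighboring T T' → ∀ y, ψ T y ≤ Real.exp (1/(η*n)) * ψ T' y)
    (S S' : Fin n → X × Bool) (htail : ∀ j : Fin n, j.val ≠ 0 → S j = S' j)
    (F : Finset (X → Bool)) (hFne : F.Nonempty) (x : X) :
    EPred η ψ S F x ≤ Real.exp (3 * ε) * EPred η ψ S' F x := by
  have hnR : (0:ℝ) < n := by exact_mod_cast hn
  have hηn : (0:ℝ) < η * n := by positivity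
  set κ : ℝ := 1/(η*n) with hκ
  have hκ0 : 0 ≤ κ := by positivity
  set w : (X → Bool) → ℝ := fun h => Real.exp (-(empLoss S h) / η) with hw
  set w' : (X → Bool) → ℝ := fun h => Real.exp (-(empLoss S' h) / η) with hw'
  set a : (X → Bool) → ℝ := fun h => ψ (fun i => ((S i).1, h ((S i).1))) x with ha
  set a' : (X → Bool) → ℝ := fun h => ψ (fun i => ((S' i).1, h ((S' i).1))) x with ha'
  have hempty : ∀ h : X → Bool,
      (univ.filter fun i : Fin n => i.val ≠ 0 ∧ h (S i).1 ≠ h (S i).1) = ∅ :=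
    fun h => Finset.filter_eq_empty_iff.mpr (fun i _ => by simp)
  have hempty' : ∀ h : X → Bool,
      (univ.filter fun i : Fin n => i.val ≠ 0 ∧ h (S' i).1 ≠ h (S' i).1) = ∅ :=
    fun h => Finset.filter_eq_empty_iff.mpr (fun i _ => by simp)
  have htail' : ∀ j : Fin n, j.val ≠ 0 → S' j = S j := fun j hj => (htail j hj).symm
  -- weight comparisons
  have hwle : ∀ h : X → Bool, w h ≤ Real.exp κ * w' h := by
    intro h
    have hL := aux_loss hn S S' htail h h
    rw [hempty h] at hL
    simp only [Finset.card_empty, Nat.cast_zero, zero_add] at hL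
    rw [hw, hw', ← Real.exp_add]
    apply Real.exp_le_exp.mpr
    rw [neg_div, neg_div, hκ]
    have : empLoss S' h - empLoss S h ≤ 1 / n := by linarith
    have h2 : (empLoss S' h - empLoss S h) / η ≤ (1/n)/η := by gcongr
    rw [sub_div] at h2
    rw [div_div] at h2
    have : (1:ℝ)/(n*η) = 1/(η*n) := by rw [mul_comm]
    linarith [this ▸ h2]
  have hw'le : ∀ h : X → Bool, w' h ≤ Real.exp κ * w h := by
    intro h
    have hL := aux_loss hn S' S htail' h h
    rw [hempty' h] at hL
    simp only [Finset.card_empty, Nat.cast_zero, zero_add] at hL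
    rw [hw, hw', ← Real.exp_add]
    apply Real.exp_le_exp.mpr
    rw [neg_div, neg_div, hκ]
    have : empLoss S h - empLoss S' h ≤ 1 / n := by linarith
    have h2 : (empLoss S h - empLoss S' h) / η ≤ (1/n)/η := by gcongr
    rw [sub_div] at h2
    rw [div_div] at h2
    have : (1:ℝ)/(n*η) = 1/(η*n) := by rw [mul_comm]
    linarith [this ▸ h2]
  -- prediction comparison
  have hale : ∀ h : X → Bool, a h ≤ Real.exp κ * a' h := by
    intro h
    have hd := aux_data_diff hn S S' htail h h
    rw [hempty h] at hd
    simp only [Finset.card_empty, zero_add] at hd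
    have := aux_group_priv hκ0 ψ (fun T y => (hψ01 T y).1) hpriv 1
      (fun i => ((S i).1, h ((S i).1))) (fun i => ((S' i).1, h ((S' i).1))) x hd
    simpa using this
  -- combine
  have hnum : ∑ h ∈ F, w h * a h ≤ (Real.exp κ * Real.exp κ) * ∑ h ∈ F, w' h * a' h := by
    rw [Finset.mul_sum]
    apply Finset.sum_le_sum
    intro h _
    have h1 : 0 ≤ a h := (hψ01 _ x).1
    have h2 : 0 ≤ Real.exp κ * w' h := by positivity
    calc w h * a h ≤ (Real.exp κ * w' h) * (Real.exp κ * a' h) :=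
          mul_le_mul (hwle h) (hale h) h1 h2
      _ = Real.exp κ * Real.exp κ * (w' h * a' h) := by ring
  have hden : ∑ h ∈ F, w' h ≤ Real.exp κ * ∑ h ∈ F, w h := by
    rw [Finset.mul_sum]; exact Finset.sum_le_sum fun h _ => hw'le h
  have hmain := aux_ratio F F w w' a a' hFne hFne (fun h => Real.exp_pos _)
    (fun h => Real.exp_pos _) (fun h => (hψ01 _ x).1) (Real.exp κ * Real.exp κ) (Real.exp κ)
    (by positivity) (by positivity) hnum hden
  have hcoef : Real.exp κ * Real.exp κ * Real.exp κ ≤ Real.exp (3 * ε) := by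
    rw [← Real.exp_add, ← Real.exp_add]
    apply Real.exp_le_exp.mpr
    linarith [hκε]
  have hE' : 0 ≤ (∑ h ∈ F, w' h * a' h) / (∑ h ∈ F, w' h) :=
    div_nonneg (Finset.sum_nonneg fun h _ => mul_nonneg (Real.exp_pos _).le (hψ01 _ x).1)
      (Finset.sum_nonneg fun h _ => (Real.exp_pos _).le)
  calc EPred η ψ S F x = (∑ h ∈ F, w h * a h) / (∑ h ∈ F, w h) := rfl
    _ ≤ Real.exp κ * Real.exp κ * Real.exp κ * ((∑ h ∈ F, w' h * a' h) / (∑ h ∈ F, w' h)) :=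
        hmain
    _ ≤ Real.exp (3 * ε) * ((∑ h ∈ F, w' h * a' h) / (∑ h ∈ F, w' h)) :=
        mul_le_mul_of_nonneg_right hcoef hE'
    _ = Real.exp (3 * ε) * EPred η ψ S' F x := rfl
/-- Hard case: the changed index is in `I`, but `I∖{0}` is an `η`-net. -/
lemma compare_good (H : Set (X → Bool)) {n : ℕ} (hn : 0 < n)
    {η ε : ℝ} (hη : 0 < η) (hε2 : ε ≤ 1/2) (hκε : 1/(η*n) ≤ ε)
    (ψ : (Fin n → X × Bool) → X → ℝ) (hψ01 : ∀ T y, ψ T y ∈ Set.Icc (0:ℝ) 1)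
    (hpriv : ∀ T T', Neighboring T T' → ∀ y, ψ T y ≤ Real.exp (1/(η*n)) * ψ T' y)
    (S S' : Fin n → X × Bool) (htail : ∀ j : Fin n, j.val ≠ 0 → S j = S' j)
    (hHne : H.Nonempty)
    (I : Finset (Fin n)) (hi0 : (⟨0, hn⟩ : Fin n) ∈ I)
    (hnet : IsNetOn H (fun j => (S j).1) (I.erase ⟨0, hn⟩) η)
    (j : Fin n) (hj : j ∉ I)
    (F F'' : Finset (X → Bool))
    (hPC : IsPatternClass H (fun j => (S j).1) I F)
    (hPC'' : IsPatternClass H (fun j => (S' j).1) (insert j (I.erase ⟨0, hn⟩)) F'')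
    (x : X) :
    EPred η ψ S F x ≤ 4 * Real.exp 6 * EPred η ψ S' F'' x := by
  classical
  set i0 : Fin n := ⟨0, hn⟩ with hi0def
  set xs : Fin n → X := fun j => (S j).1 with hxs
  set xs' : Fin n → X := fun j => (S' j).1 with hxs'
  have hxx : ∀ i : Fin n, i ≠ i0 → xs i = xs' i := by
    intro i hi
    have h0 : i.val ≠ 0 := fun h0 => hi (Fin.ext h0)
    simp only [hxs, hxs', htail i h0]
  set J := I.erase i0 with hJ
  set I' := insert j J with hI'
  have hji0 : j ≠ i0 := fun hji => hj (hji ▸ hi0)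
  have hJI' : ∀ i ∈ J, i ∈ I' := fun i hi => Finset.mem_insert_of_mem hi
  have hJI : ∀ i ∈ J, i ∈ I := fun i hi => Finset.mem_of_mem_erase hi
  have hJne0 : ∀ i ∈ J, i ≠ i0 := fun i hi => (Finset.mem_erase.mp hi).1
  obtain ⟨hFH, hFsurj, hFinj⟩ := hPC
  obtain ⟨hF''H, hF''surj, hF''inj⟩ := hPC''
  have hFne : F.Nonempty := by
    obtain ⟨h0, hh0⟩ := hHne
    obtain ⟨f, hf, -⟩ := hFsurj h0 hh0
    exact ⟨f, hf⟩
  have hF''ne : F''.Nonempty := by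
    obtain ⟨h0, hh0⟩ := hHne
    obtain ⟨f, hf, -⟩ := hF''surj h0 hh0
    exact ⟨f, hf⟩
  set w : (X → Bool) → ℝ := fun h => Real.exp (-(empLoss S h) / η) with hw
  set w'' : (X → Bool) → ℝ := fun h => Real.exp (-(empLoss S' h) / η) with hw''
  set a : (X → Bool) → ℝ := fun h => ψ (fun i => ((S i).1, h ((S i).1))) x with ha
  set a'' : (X → Bool) → ℝ := fun h => ψ (fun i => ((S' i).1, h ((S' i).1))) x with ha''
  -- forward map σ : F → F''
  set σ : (X → Bool) → (X → Bool) :=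
    fun h => if hx : ∃ f, f ∈ F'' ∧ ∀ i ∈ I', f (xs' i) = h (xs' i) then hx.choose else h
    with hσdef
  have hσspec : ∀ h ∈ F, σ h ∈ F'' ∧ ∀ i ∈ I', σ h (xs' i) = h (xs' i) := by
    intro h hh
    have hx : ∃ f, f ∈ F'' ∧ ∀ i ∈ I', f (xs' i) = h (xs' i) := hF''surj h (hFH h hh)
    simp only [hσdef, dif_pos hx]
    exact hx.choose_spec
  -- reverse map τ : F'' → F
  set τ : (X → Bool) → (X → Bool) :=
    fun h => if hx : ∃ f, f ∈ F ∧ ∀ i ∈ I, f (xs i) = h (xs i) then hx.choose else h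
    with hτdef
  have hτspec : ∀ h ∈ F'', τ h ∈ F ∧ ∀ i ∈ I, τ h (xs i) = h (xs i) := by
    intro h hh
    have hx : ∃ f, f ∈ F ∧ ∀ i ∈ I, f (xs i) = h (xs i) := hFsurj h (hF''H h hh)
    simp only [hτdef, dif_pos hx]
    exact hx.choose_spec
  -- agreement on J
  have hσJ : ∀ h ∈ F, ∀ i ∈ J, h (xs i) = (σ h) (xs i) := by
    intro h hh i hi
    rw [hxx i (hJne0 i hi)]
    exact ((hσspec h hh).2 i (hJI' i hi)).symm
  have hτJ : ∀ h ∈ F'', ∀ i ∈ J, (τ h) (xs i) = h (xs i) :=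
    fun h hh i hi => (hτspec h hh).2 i (hJI i hi)
  -- net bounds
  have hσnet : ∀ h ∈ F,
      ((univ.filter fun i : Fin n => i.val ≠ 0 ∧ h (S i).1 ≠ (σ h) (S i).1).card : ℝ)
        ≤ η * (n - 1) :=
    fun h hh => hnet h (hFH h hh) (σ h) (hF''H _ (hσspec h hh).1) (hσJ h hh)
  have hτnet : ∀ h ∈ F'',
      ((univ.filter fun i : Fin n => i.val ≠ 0 ∧ (τ h) (S i).1 ≠ h (S i).1).card : ℝ)
        ≤ η * (n - 1) :=
    fun h hh => hnet (τ h) (hFH _ (hτspec h hh).1) h (hF''H h hh) (hτJ h hh)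
  -- numerator pair bound
  have hpair1 : ∀ h ∈ F, w h * a h ≤ Real.exp 4 * (w'' (σ h) * a'' (σ h)) := by
    intro h hh
    obtain ⟨hwb, hab⟩ := aux_pair hn hη hε2 hκε ψ hψ01 hpriv S S' htail h (σ h) (hσnet h hh) x
    have h1 : 0 ≤ a h := (hψ01 _ x).1
    have h2 : (0:ℝ) ≤ Real.exp 2 * w'' (σ h) := by positivity
    calc w h * a h ≤ (Real.exp 2 * w'' (σ h)) * (Real.exp 2 * a'' (σ h)) :=
          mul_le_mul hwb hab h1 h2
      _ = (Real.exp 2 * Real.exp 2) * (w'' (σ h) * a'' (σ h)) := by ring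
      _ = Real.exp 4 * (w'' (σ h) * a'' (σ h)) := by
          rw [← Real.exp_add]; norm_num
  -- denominator pair bound
  have htail' : ∀ j : Fin n, j.val ≠ 0 → S' j = S j := fun j hj => (htail j hj).symm
  have hpair2 : ∀ h ∈ F'', w'' h ≤ Real.exp 2 * w (τ h) := by
    intro h hh
    have hDflip := aux_filter_flip S S' htail (τ h) h
    have hD' : ((univ.filter fun i : Fin n =>
        i.val ≠ 0 ∧ h (S' i).1 ≠ (τ h) (S' i).1).card : ℝ) ≤ η * (n - 1) := by
      rw [hDflip]; exact hτnet h hh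
    exact (aux_pair hn hη hε2 hκε ψ hψ01 hpriv S' S htail' h (τ h) hD' x).1
  -- multiplicity of σ
  have hmultσ : ∀ b ∈ F'', (F.filter fun h => σ h = b).card ≤ 2 := by
    intro b _
    have hinj : Set.InjOn (fun h : X → Bool => h (xs i0)) (F.filter fun h => σ h = b) := by
      intro h₁ hh₁ h₂ hh₂ heq
      simp only [Finset.coe_filter, Set.mem_setOf_eq] at hh₁ hh₂
      apply hFinj h₁ hh₁.1 h₂ hh₂.1
      intro i hi
      by_cases hii : i = i0
      · rw [hii]; exact heq
      · have hiJ : i ∈ J := Finset.mem_erase.mpr ⟨hii, hi⟩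
        calc h₁ (xs i) = σ h₁ (xs i) := hσJ h₁ hh₁.1 i hiJ
          _ = σ h₂ (xs i) := by rw [hh₁.2, hh₂.2]
          _ = h₂ (xs i) := (hσJ h₂ hh₂.1 i hiJ).symm
    have := Finset.card_le_card_of_injOn (fun h : X → Bool => h (xs i0))
      (fun h _ => Finset.mem_univ (h (xs i0))) hinj
    simpa using this
  -- multiplicity of τ
  have hmultτ : ∀ b ∈ F, (F''.filter fun h => τ h = b).card ≤ 2 := by
    intro b _
    have hinj : Set.InjOn (fun h : X → Bool => h (xs' j)) (F''.filter fun h => τ h = b) := by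
      intro h₁ hh₁ h₂ hh₂ heq
      simp only [Finset.coe_filter, Set.mem_setOf_eq] at hh₁ hh₂
      apply hF''inj h₁ hh₁.1 h₂ hh₂.1
      intro i hi
      rcases Finset.mem_insert.mp hi with rfl | hiJ
      · exact heq
      · have hxi : xs i = xs' i := hxx i (hJne0 i hiJ)
        rw [← hxi]
        calc h₁ (xs i) = τ h₁ (xs i) := (hτJ h₁ hh₁.1 i hiJ).symm
          _ = τ h₂ (xs i) := by rw [hh₁.2, hh₂.2]
          _ = h₂ (xs i) := hτJ h₂ hh₂.1 i hiJ
    have := Finset.card_le_card_of_injOn (fun h : X → Bool => h (xs' j))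
      (fun h _ => Finset.mem_univ (h (xs' j))) hinj
    simpa using this
  -- sums
  have hnum := aux_fiber_sum F F'' σ (fun h => w h * a h) (fun h => w'' h * a'' h)
    (Real.exp 4) (Real.exp_pos 4).le 2 (fun h hh => (hσspec h hh).1)
    (fun b _ => mul_nonneg (Real.exp_pos _).le (hψ01 _ x).1) hpair1 hmultσ
  have hden := aux_fiber_sum F'' F τ (fun h => w'' h) (fun h => w h)
    (Real.exp 2) (Real.exp_pos 2).le 2 (fun h hh => (hτspec h hh).1)
    (fun b _ => (Real.exp_pos _).le) hpair2 hmultτ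
  have hmain := aux_ratio F F'' w w'' a a'' hFne hF''ne (fun h => Real.exp_pos _)
    (fun h => Real.exp_pos _) (fun h => (hψ01 _ x).1)
    ((2:ℕ) * Real.exp 4) ((2:ℕ) * Real.exp 2) (by positivity) (by positivity) hnum hden
  have hE'' : 0 ≤ (∑ h ∈ F'', w'' h * a'' h) / (∑ h ∈ F'', w'' h) :=
    div_nonneg (Finset.sum_nonneg fun h _ => mul_nonneg (Real.exp_pos _).le (hψ01 _ x).1)
      (Finset.sum_nonneg fun h _ => (Real.exp_pos _).le)
  have hcoef : ((2:ℕ) : ℝ) * Real.exp 4 * (((2:ℕ) : ℝ) * Real.exp 2) = 4 * Real.exp 6 := by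
    push_cast
    rw [show (4:ℝ) * Real.exp 6 = 4 * (Real.exp 4 * Real.exp 2) by rw [← Real.exp_add]; norm_num]
    ring
  calc EPred η ψ S F x = (∑ h ∈ F, w h * a h) / (∑ h ∈ F, w h) := rfl
    _ ≤ ((2:ℕ) * Real.exp 4) * ((2:ℕ) * Real.exp 2) *
        ((∑ h ∈ F'', w'' h * a'' h) / (∑ h ∈ F'', w'' h)) := hmain
    _ = 4 * Real.exp 6 * ((∑ h ∈ F'', w'' h * a'' h) / (∑ h ∈ F'', w'' h)) := by rw [hcoef]
    _ = 4 * Real.exp 6 * EPred η ψ S' F'' x := rfl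
lemma master (H : Set (X → Bool)) {n n' : ℕ} (hn'pos : 0 < n') (hn'n : n' ≤ n)
    (hn : 0 < n)
    {η ε α : ℝ} (hη : 0 < η) (hε : 0 < ε) (hε2 : ε ≤ 1/2) (hα : 0 < α)
    (ψ : (Fin n → X × Bool) → X → ℝ) (hψ01 : ∀ T y, ψ T y ∈ Set.Icc (0:ℝ) 1)
    (hpriv : ∀ T T', Neighboring T T' → ∀ y, ψ T y ≤ Real.exp (1/(η*n)) * ψ T' y)
    (hκε : 1/(η*n) ≤ ε) (hn'ε : (n':ℝ) ≤ ε * n)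
    (S S' : Fin n → X × Bool) (htail : ∀ j : Fin n, j.val ≠ 0 → S j = S' j)
    (Pat : (Fin n → X) → Finset (Fin n) → Finset (X → Bool))
    (hPat : ∀ xs I, I.card = n' → IsPatternClass H xs I (Pat xs I))
    (hPatLoc : ∀ xs xs' I, (∀ i ∈ I, xs i = xs' i) → Pat xs I = Pat xs' I)
    (hHne : H.Nonempty)
    (hbad : ((((univ : Finset (Fin n)).powersetCard n').filter fun I =>
        (⟨0, hn⟩ : Fin n) ∈ I ∧
        ¬ IsNetOn H (fun j => (S j).1) (I.erase ⟨0, hn⟩) η).card : ℝ)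
      ≤ α * ((n - 1).choose (n' - 1)))
    (x : X) :
    ∑ I ∈ (univ : Finset (Fin n)).powersetCard n', EPred η ψ S (Pat (fun j => (S j).1) I) x
      ≤ (Real.exp (3*ε) + 8 * Real.exp 6 * ε) *
          (∑ I ∈ (univ : Finset (Fin n)).powersetCard n',
            EPred η ψ S' (Pat (fun j => (S' j).1) I) x)
        + ε * α * (n.choose n') := by
  classical
  have hnR : (0:ℝ) < n := by exact_mod_cast hn
  set i0 : Fin n := ⟨0, hn⟩ with hi0def
  set xs : Fin n → X := fun j => (S j).1 with hxs
  set xs' : Fin n → X := fun j => (S' j).1 with hxs'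
  set P : Finset (Finset (Fin n)) := (univ : Finset (Fin n)).powersetCard n' with hP
  set t : Finset (Fin n) → ℝ := fun I => EPred η ψ S (Pat xs I) x with ht
  set t' : Finset (Fin n) → ℝ := fun I => EPred η ψ S' (Pat xs' I) x with ht'
  have hcard : ∀ I ∈ P, I.card = n' := fun I hI => (Finset.mem_powersetCard.mp hI).2
  have hψnn : ∀ T y, 0 ≤ ψ T y := fun T y => (hψ01 T y).1
  have ht'0 : ∀ I, 0 ≤ t' I := fun I => EPred_nonneg _ _ _ _ _ hψnn
  have ht0 : ∀ I, 0 ≤ t I := fun I => EPred_nonneg _ _ _ _ _ hψnn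
  have ht1 : ∀ I, t I ≤ 1 := fun I => EPred_le_one _ _ _ _ _ (fun T y => (hψ01 T y).2)
  have hPatne : ∀ (z : Fin n → X) (I : Finset (Fin n)), I.card = n' → (Pat z I).Nonempty := by
    intro z I hI
    obtain ⟨h0, hh0⟩ := hHne
    obtain ⟨f, hf, -⟩ := (hPat z I hI).2.1 h0 hh0
    exact ⟨f, hf⟩
  -- splitting
  have e1 : ∑ I ∈ P, t I =
      ∑ I ∈ P.filter (fun I => i0 ∈ I), t I + ∑ I ∈ P.filter (fun I => i0 ∉ I), t I :=
    (Finset.sum_filter_add_sum_filter_not P _ t).symm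
  have e2 : ∑ I ∈ P.filter (fun I => i0 ∈ I), t I =
      ∑ I ∈ P.filter (fun I => i0 ∈ I ∧ IsNetOn H xs (I.erase i0) η), t I +
      ∑ I ∈ P.filter (fun I => i0 ∈ I ∧ ¬ IsNetOn H xs (I.erase i0) η), t I := by
    rw [← Finset.sum_filter_add_sum_filter_not (P.filter (fun I => i0 ∈ I))
      (fun I => IsNetOn H xs (I.erase i0) η) t, Finset.filter_filter, Finset.filter_filter]
  set G1 : Finset (Finset (Fin n)) := P.filter (fun I => i0 ∉ I) with hG1
  set G2 : Finset (Finset (Fin n)) := P.filter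
    (fun I => i0 ∈ I ∧ IsNetOn H xs (I.erase i0) η) with hG2
  set G3 : Finset (Finset (Fin n)) := P.filter
    (fun I => i0 ∈ I ∧ ¬ IsNetOn H xs (I.erase i0) η) with hG3
  -- Bound for G1
  have hB1 : ∑ I ∈ G1, t I ≤ Real.exp (3*ε) * ∑ I ∈ P, t' I := by
    have step : ∀ I ∈ G1, t I ≤ Real.exp (3*ε) * t' I := by
      intro I hI
      have hIP : I ∈ P := Finset.mem_of_mem_filter I hI
      have hi0I : i0 ∉ I := (Finset.mem_filter.mp hI).2
      have hagree : ∀ i ∈ I, xs i = xs' i := by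
        intro i hi
        have : i.val ≠ 0 := by
          intro h0
          exact hi0I (by rwa [show i = i0 from Fin.ext h0] at hi)
        simp only [hxs, hxs', htail i this]
      have hPP : Pat xs I = Pat xs' I := hPatLoc xs xs' I hagree
      have hce := compare_easy hn hη hκε ψ hψ01 hpriv S S' htail (Pat xs I)
        (hPatne xs I (hcard I hIP)) x
      show EPred η ψ S (Pat xs I) x ≤ Real.exp (3 * ε) * EPred η ψ S' (Pat xs' I) x
      rw [← hPP]
      exact hce
    calc ∑ I ∈ G1, t I ≤ ∑ I ∈ G1, Real.exp (3*ε) * t' I := Finset.sum_le_sum step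
      _ = Real.exp (3*ε) * ∑ I ∈ G1, t' I := (Finset.mul_sum _ _ _).symm
      _ ≤ Real.exp (3*ε) * ∑ I ∈ P, t' I := by
          apply mul_le_mul_of_nonneg_left _ (Real.exp_nonneg _)
          exact Finset.sum_le_sum_of_subset_of_nonneg (Finset.filter_subset _ _)
            (fun I hI _ => ht'0 I)
  -- Bound for G3
  have hchoose : (n:ℝ) * ((n - 1).choose (n' - 1)) = (n.choose n') * n' := by
    have hid := Nat.add_one_mul_choose_eq (n-1) (n'-1)
    have h1 : n - 1 + 1 = n := by omega
    have h2 : n' - 1 + 1 = n' := by omega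
    simp only [Nat.succ_eq_add_one, h1, h2] at hid
    exact_mod_cast hid
  have hB3 : ∑ I ∈ G3, t I ≤ ε * α * (n.choose n') := by
    have h1 : ∑ I ∈ G3, t I ≤ (G3.card : ℝ) := by
      calc ∑ I ∈ G3, t I ≤ ∑ I ∈ G3, 1 := Finset.sum_le_sum (fun I _ => ht1 I)
        _ = (G3.card : ℝ) := by simp
    have h2 : (G3.card : ℝ) ≤ α * ((n - 1).choose (n' - 1)) := hbad
    have h3 : α * ((n - 1).choose (n' - 1)) ≤ ε * α * (n.choose n') := by
      have key : α * (((n - 1).choose (n' - 1) : ℝ)) * n = α * ((n.choose n' : ℝ) * n') := by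
        rw [mul_assoc, mul_comm (((n - 1).choose (n' - 1) : ℝ)) (n:ℝ), hchoose]
      have key2 : α * ((n.choose n' : ℝ) * n') ≤ α * ((n.choose n' : ℝ) * (ε * n)) := by
        apply mul_le_mul_of_nonneg_left _ hα.le
        exact mul_le_mul_of_nonneg_left hn'ε (Nat.cast_nonneg _)
      have key3 : α * (((n - 1).choose (n' - 1) : ℝ)) * n ≤ (ε * α * (n.choose n')) * n := by
        calc α * (((n - 1).choose (n' - 1) : ℝ)) * n = α * ((n.choose n' : ℝ) * n') := key
          _ ≤ α * ((n.choose n' : ℝ) * (ε * n)) := key2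
          _ = (ε * α * (n.choose n')) * n := by ring
      exact le_of_mul_le_mul_right key3 hnR
    linarith
  -- Bound for G2
  have hn'n2 : (n':ℝ) ≤ (n:ℝ)/2 := le_trans hn'ε (by nlinarith)
  have hnn'R : ((n - n' : ℕ) : ℝ) = (n:ℝ) - n' := by
    push_cast [Nat.cast_sub hn'n]; ring
  have hhalf : (n:ℝ)/2 ≤ ((n - n' : ℕ) : ℝ) := by rw [hnn'R]; linarith
  have hkey2 : ∀ I ∈ G2, ∀ j ∈ (univ : Finset (Fin n)) \ I,
      t I ≤ 4 * Real.exp 6 * t' (insert j (I.erase i0)) := by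
    intro I hI j hj
    have hIP : I ∈ P := Finset.mem_of_mem_filter I hI
    have hi0I : i0 ∈ I := (Finset.mem_filter.mp hI).2.1
    have hnet : IsNetOn H xs (I.erase i0) η := (Finset.mem_filter.mp hI).2.2
    have hjI : j ∉ I := (Finset.mem_sdiff.mp hj).2
    have hcI : I.card = n' := hcard I hIP
    have hcI' : (insert j (I.erase i0)).card = n' := by
      rw [Finset.card_insert_of_notMem (fun hjj => hjI (Finset.mem_of_mem_erase hjj)),
        Finset.card_erase_of_mem hi0I, hcI]
      omega
    exact compare_good H hn hη hε2 hκε ψ hψ01 hpriv S S' htail hHne I hi0I hnet j hjI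
      (Pat xs I) (Pat xs' (insert j (I.erase i0))) (hPat xs I hcI)
      (hPat xs' (insert j (I.erase i0)) hcI') x
  have hfiber : ∑ p ∈ G2.sigma (fun I => (univ : Finset (Fin n)) \ I),
      t' (insert p.2 (p.1.erase i0)) ≤ (n' : ℝ) * 1 * ∑ I' ∈ G1, t' I' := by
    apply aux_fiber_sum (G2.sigma (fun I => (univ : Finset (Fin n)) \ I)) G1
      (fun p => insert p.2 (p.1.erase i0)) _ t' 1 zero_le_one n'
    · -- maps to
      intro p hp
      obtain ⟨hp1, hp2⟩ := Finset.mem_sigma.mp hp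
      have hi0p : i0 ∈ p.1 := (Finset.mem_filter.mp hp1).2.1
      have hjp : p.2 ∉ p.1 := (Finset.mem_sdiff.mp hp2).2
      have hcp : p.1.card = n' := hcard p.1 (Finset.mem_of_mem_filter _ hp1)
      have hji0 : p.2 ≠ i0 := fun hq => hjp (hq ▸ hi0p)
      refine Finset.mem_filter.mpr ⟨?_, ?_⟩
      · apply Finset.mem_powersetCard.mpr
        refine ⟨Finset.subset_univ _, ?_⟩
        rw [Finset.card_insert_of_notMem (fun hjj => hjp (Finset.mem_of_mem_erase hjj)),
          Finset.card_erase_of_mem hi0p, hcp]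
        omega
      · intro hmem
        rcases Finset.mem_insert.mp hmem with h | h
        · exact hji0 h.symm
        · exact (Finset.mem_erase.mp h).1 rfl
    · exact fun b _ => ht'0 b
    · intro p _; rw [one_mul]
    · -- multiplicity
      intro I' hI'
      have hIc : I'.card = n' := hcard I' (Finset.mem_of_mem_filter _ hI')
      rw [Finset.filter_congr_decidable]
      refine le_trans (Finset.card_le_card_of_injOn
        (fun p : (_ : Finset (Fin n)) × Fin n => p.2) ?_ ?_) (le_of_eq hIc)
      · intro p hp
        have := (Finset.mem_filter.mp hp).2
        rw [← this]
        exact Finset.mem_insert_self _ _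
      · intro p hp q hq hpq
        simp only at hpq
        simp only [Finset.coe_filter, Set.mem_setOf_eq] at hp hq
        obtain ⟨hpΩ, hpI⟩ := hp
        obtain ⟨hqΩ, hqI⟩ := hq
        obtain ⟨hp1, hp2⟩ := Finset.mem_sigma.mp hpΩ
        obtain ⟨hq1, hq2⟩ := Finset.mem_sigma.mp hqΩ
        have hi0p : i0 ∈ p.1 := (Finset.mem_filter.mp hp1).2.1
        have hi0q : i0 ∈ q.1 := (Finset.mem_filter.mp hq1).2.1
        have hjp : p.2 ∉ p.1 := (Finset.mem_sdiff.mp hp2).2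
        have hjq : q.2 ∉ q.1 := (Finset.mem_sdiff.mp hq2).2
        have hp1e : p.1.erase i0 = I'.erase p.2 := by
          rw [← hpI, Finset.erase_insert (fun hjj => hjp (Finset.mem_of_mem_erase hjj))]
        have hq1e : q.1.erase i0 = I'.erase q.2 := by
          rw [← hqI, Finset.erase_insert (fun hjj => hjq (Finset.mem_of_mem_erase hjj))]
        have hfst : p.1 = q.1 := by
          rw [← Finset.insert_erase hi0p, ← Finset.insert_erase hi0q, hp1e, hq1e, hpq]
        obtain ⟨pa, pb⟩ := p
        obtain ⟨qa, qb⟩ := q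
        simp only at hfst hpq
        subst hfst; subst hpq; rfl
  have hB2 : ∑ I ∈ G2, t I ≤ 8 * Real.exp 6 * ε * ∑ I ∈ P, t' I := by
    have hsum1 : ∀ I ∈ G2, ((n - n' : ℕ) : ℝ) * t I = ∑ _j ∈ (univ : Finset (Fin n)) \ I, t I := by
      intro I hI
      rw [Finset.sum_const, nsmul_eq_mul, Finset.card_sdiff_of_subset (Finset.subset_univ I),
        Finset.card_univ, Fintype.card_fin, hcard I (Finset.mem_of_mem_filter I hI)]
    have hB2a : ((n - n' : ℕ):ℝ) * ∑ I ∈ G2, t I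
        ≤ 4 * Real.exp 6 * ((n' : ℝ) * 1 * ∑ I' ∈ G1, t' I') := by
      rw [Finset.mul_sum]
      calc ∑ I ∈ G2, ((n - n':ℕ):ℝ) * t I
          = ∑ I ∈ G2, ∑ _j ∈ (univ : Finset (Fin n)) \ I, t I := Finset.sum_congr rfl hsum1
        _ ≤ ∑ I ∈ G2, ∑ j ∈ (univ : Finset (Fin n)) \ I,
            4 * Real.exp 6 * t' (insert j (I.erase i0)) :=
            Finset.sum_le_sum (fun I hI => Finset.sum_le_sum (fun j hj => hkey2 I hI j hj))
        _ = 4 * Real.exp 6 * ∑ I ∈ G2, ∑ j ∈ (univ : Finset (Fin n)) \ I,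
            t' (insert j (I.erase i0)) := by
            rw [Finset.mul_sum]
            exact Finset.sum_congr rfl (fun I _ => (Finset.mul_sum _ _ _).symm)
        _ = 4 * Real.exp 6 * ∑ p ∈ G2.sigma (fun I => (univ : Finset (Fin n)) \ I),
            t' (insert p.2 (p.1.erase i0)) := by rw [Finset.sum_sigma]
        _ ≤ 4 * Real.exp 6 * ((n' : ℝ) * 1 * ∑ I' ∈ G1, t' I') := by
            apply mul_le_mul_of_nonneg_left hfiber (by positivity)
    have hG2nn : (0:ℝ) ≤ ∑ I ∈ G2, t I := Finset.sum_nonneg (fun I _ => ht0 I)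
    have hG1P : ∑ I' ∈ G1, t' I' ≤ ∑ I ∈ P, t' I :=
      Finset.sum_le_sum_of_subset_of_nonneg (Finset.filter_subset _ _) (fun I hI _ => ht'0 I)
    have hG1nn : (0:ℝ) ≤ ∑ I' ∈ G1, t' I' := Finset.sum_nonneg (fun I _ => ht'0 I)
    have h4 : (n:ℝ)/2 * ∑ I ∈ G2, t I ≤ (n:ℝ)/2 * (8 * Real.exp 6 * ε * ∑ I ∈ P, t' I) := by
      calc (n:ℝ)/2 * ∑ I ∈ G2, t I ≤ ((n - n':ℕ):ℝ) * ∑ I ∈ G2, t I :=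
            mul_le_mul_of_nonneg_right hhalf hG2nn
        _ ≤ 4 * Real.exp 6 * ((n' : ℝ) * 1 * ∑ I' ∈ G1, t' I') := hB2a
        _ ≤ 4 * Real.exp 6 * ((ε * n) * 1 * ∑ I ∈ P, t' I) := by
            apply mul_le_mul_of_nonneg_left _ (by positivity)
            rw [mul_one, mul_one]
            apply mul_le_mul hn'ε hG1P hG1nn (by positivity)
        _ = (n:ℝ)/2 * (8 * Real.exp 6 * ε * ∑ I ∈ P, t' I) := by ring
    exact le_of_mul_le_mul_left h4 (by positivity)
  -- assemble
  calc ∑ I ∈ P, t I = (∑ I ∈ G2, t I + ∑ I ∈ G3, t I) + ∑ I ∈ G1, t I := by rw [e1, e2]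
    _ ≤ (8 * Real.exp 6 * ε * ∑ I ∈ P, t' I + ε * α * (n.choose n')) +
        Real.exp (3*ε) * ∑ I ∈ P, t' I := by
        exact add_le_add (add_le_add hB2 hB3) hB1
    _ = (Real.exp (3*ε) + 8 * Real.exp 6 * ε) * (∑ I ∈ P, t' I) + ε * α * (n.choose n') := by
        ring

/-- Lemma (privacy of the main algorithm): if `φ` has `1/(ηn)`-differentially-private
prediction, `1/(ηn) ≤ ε`, `n' ≤ εn`, and at most an `α`-fraction of the size-`n'` subsets
containing the changed index fail to yield an `η`-net, then
`h_S ⪯ (1 + Cε)·e^{3ε}·h_{S'} + Cεα` for neighboring `S, S'` differing in their first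
entry, where the same fixed choice of pattern classes (a function of the points alone)
is used for both datasets. -/
theorem stmt1 :
    ∃ C : ℝ, 0 < C ∧
      ∀ (X : Type) (H : Set (X → Bool)) (n n' : ℕ) (hn'pos : 0 < n') (hn'n : n' ≤ n)
        (η ε α : ℝ), 0 < η → ε ∈ Set.Ioc (0:ℝ) (1/2) → α ∈ Set.Ioo (0:ℝ) 1 →
      ∀ φ : (Fin n → X × Bool) → X → ℝ,
        (∀ T x, φ T x ∈ Set.Icc (0:ℝ) 1) →
        PrivatePrediction (1 / (η * n)) φ →
        1 / (η * n) ≤ ε → (n' : ℝ) ≤ ε * n →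
      ∀ S S' : Fin n → X × Bool,
        S ⟨0, Nat.lt_of_lt_of_le hn'pos hn'n⟩ ≠ S' ⟨0, Nat.lt_of_lt_of_le hn'pos hn'n⟩ →
        (∀ j : Fin n, j.val ≠ 0 → S j = S' j) →
      ∀ Pat : (Fin n → X) → Finset (Fin n) → Finset (X → Bool),
        (∀ (xs : Fin n → X) (I : Finset (Fin n)), I.card = n' →
          IsPatternClass H xs I (Pat xs I)) →
        (∀ (xs xs' : Fin n → X) (I : Finset (Fin n)), (∀ i ∈ I, xs i = xs' i) →
          Pat xs I = Pat xs' I) →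
        ((((univ : Finset (Fin n)).powersetCard n').filter fun I =>
            (⟨0, Nat.lt_of_lt_of_le hn'pos hn'n⟩ : Fin n) ∈ I ∧
            ¬ IsNetOn H (fun j => (S j).1)
                (I.erase ⟨0, Nat.lt_of_lt_of_le hn'pos hn'n⟩) η).card : ℝ)
          ≤ α * ((n - 1).choose (n' - 1)) →
      ∀ x : X,
        avgPred n' η φ S (Pat fun j => (S j).1) x
            ≤ (1 + C * ε) * Real.exp (3 * ε) *
                avgPred n' η φ S' (Pat fun j => (S' j).1) x + C * ε * α ∧
        1 - avgPred n' η φ S (Pat fun j => (S j).1) x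
            ≤ (1 + C * ε) * Real.exp (3 * ε) *
                (1 - avgPred n' η φ S' (Pat fun j => (S' j).1) x) + C * ε * α := by
  classical
  refine ⟨Real.exp 9, Real.exp_pos 9, ?_⟩
  intro X H n n' hn'pos hn'n η ε α hη hεm hαm φ hφ01 hPriv hκε hn'ε S S' hS0 htail
    Pat hPat hPatLoc hbad x
  set C : ℝ := Real.exp 9 with hC
  obtain ⟨hε, hε2⟩ := hεm
  obtain ⟨hα, hα1⟩ := hαm
  have hn : 0 < n := Nat.lt_of_lt_of_le hn'pos hn'n
  have hnR : (0:ℝ) < n := by exact_mod_cast hn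
  have hC1 : (1:ℝ) ≤ C := Real.one_le_exp (by norm_num)
  have hexp3 : (1:ℝ) ≤ Real.exp (3*ε) := Real.one_le_exp (by positivity)
  have h8 : (8:ℝ) * Real.exp 6 ≤ Real.exp 9 := by
    rw [show (9:ℝ) = 3 + 6 by norm_num, Real.exp_add]
    have h3 : (8:ℝ) ≤ Real.exp 3 := by
      have hgt := Real.exp_one_gt_d9
      have h31 : Real.exp 3 = Real.exp 1 ^ 3 := by
        rw [← Real.exp_nat_mul]; norm_num
      have hcube : (2.7182818283:ℝ)^3 ≤ Real.exp 1 ^ 3 :=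
        pow_le_pow_left₀ (by norm_num) hgt.le 3
      rw [h31]
      nlinarith [hcube]
    nlinarith [Real.exp_pos 6]
  have hNpos : (0:ℝ) < (n.choose n' : ℝ) := by exact_mod_cast Nat.choose_pos hn'n
  set P : Finset (Finset (Fin n)) := (univ : Finset (Fin n)).powersetCard n' with hP
  have hcardP : (P.card : ℝ) = (n.choose n' : ℝ) := by
    rw [hP, Finset.card_powersetCard, Finset.card_univ, Fintype.card_fin]
  have hcard : ∀ I ∈ P, I.card = n' := fun I hI => (Finset.mem_powersetCard.mp hI).2
  have hEP : ∀ (T : Fin n → X × Bool) (F : Finset (X → Bool)),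
      expPred η φ T F x = EPred η φ T F x := fun T F => rfl
  have havgS : avgPred n' η φ S (Pat fun j => (S j).1) x
      = (∑ I ∈ P, EPred η φ S (Pat (fun j => (S j).1) I) x) / (n.choose n' : ℝ) := rfl
  have havgS' : avgPred n' η φ S' (Pat fun j => (S' j).1) x
      = (∑ I ∈ P, EPred η φ S' (Pat (fun j => (S' j).1) I) x) / (n.choose n' : ℝ) := rfl
  by_cases hHne : H.Nonempty
  · -- main case
    set ψ₂ : (Fin n → X × Bool) → X → ℝ := fun T y => 1 - φ T y with hψ₂
    have hψ₂01 : ∀ T y, ψ₂ T y ∈ Set.Icc (0:ℝ) 1 := by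
      intro T y
      obtain ⟨h1, h2⟩ := hφ01 T y
      exact ⟨by simp [hψ₂]; linarith, by simp [hψ₂]; linarith⟩
    have hpriv1 : ∀ T T', Neighboring T T' → ∀ y, φ T y ≤ Real.exp (1/(η*n)) * φ T' y :=
      fun T T' hN y => (hPriv T T' hN y).1
    have hpriv2 : ∀ T T', Neighboring T T' → ∀ y, ψ₂ T y ≤ Real.exp (1/(η*n)) * ψ₂ T' y :=
      fun T T' hN y => (hPriv T T' hN y).2
    have M1 := master H hn'pos hn'n hn hη hε hε2 hα φ hφ01 hpriv1 hκε hn'ε S S' htail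
      Pat hPat hPatLoc hHne hbad x
    have M2 := master H hn'pos hn'n hn hη hε hε2 hα ψ₂ hψ₂01 hpriv2 hκε hn'ε S S' htail
      Pat hPat hPatLoc hHne hbad x
    rw [← hP] at M1 M2
    set coef : ℝ := Real.exp (3*ε) + 8 * Real.exp 6 * ε with hcoef
    set A : ℝ := ∑ I ∈ P, EPred η φ S (Pat (fun j => (S j).1) I) x with hA
    set A' : ℝ := ∑ I ∈ P, EPred η φ S' (Pat (fun j => (S' j).1) I) x with hA'
    set B : ℝ := ∑ I ∈ P, EPred η ψ₂ S (Pat (fun j => (S j).1) I) x with hB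
    set B' : ℝ := ∑ I ∈ P, EPred η ψ₂ S' (Pat (fun j => (S' j).1) I) x with hB'
    set N : ℝ := (n.choose n' : ℝ) with hN
    have hcoefle : coef ≤ (1 + C * ε) * Real.exp (3*ε) := by
      rw [hcoef, hC]
      nlinarith [mul_nonneg (mul_nonneg hε.le (Real.exp_pos 9).le)
          (sub_nonneg.mpr hexp3),
        mul_nonneg hε.le (sub_nonneg.mpr h8)]
    have hPatne : ∀ (z : Fin n → X) (I : Finset (Fin n)), I ∈ P → (Pat z I).Nonempty := by
      intro z I hI
      obtain ⟨h0, hh0⟩ := hHne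
      obtain ⟨f, hf, -⟩ := (hPat z I (hcard I hI)).2.1 h0 hh0
      exact ⟨f, hf⟩
    have hone : ∀ (T : Fin n → X × Bool) (z : Fin n → X),
        ∑ I ∈ P, EPred η ψ₂ T (Pat z I) x
          = N - ∑ I ∈ P, EPred η φ T (Pat z I) x := by
      intro T z
      have hc : ∀ I ∈ P, EPred η ψ₂ T (Pat z I) x = 1 - EPred η φ T (Pat z I) x :=
        fun I hI => (EPred_one_sub η φ T (Pat z I) x (hPatne z I hI)).symm
      rw [Finset.sum_congr rfl hc, Finset.sum_sub_distrib, Finset.sum_const,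
        nsmul_eq_mul, mul_one, hcardP]
    have hBeq : B = N - A := hone S (fun j => (S j).1)
    have hB'eq : B' = N - A' := hone S' (fun j => (S' j).1)
    have hA'0 : 0 ≤ A' :=
      Finset.sum_nonneg (fun I _ => EPred_nonneg _ _ _ _ _ (fun T y => (hφ01 T y).1))
    have hB'0 : 0 ≤ B' :=
      Finset.sum_nonneg (fun I _ => EPred_nonneg _ _ _ _ _ (fun T y => (hψ₂01 T y).1))
    clear_value A A' B B' N coef
    have hd3 : ε * α ≤ C * ε * α := by
      have h := mul_le_mul_of_nonneg_right
        (mul_le_mul_of_nonneg_right hC1 hε.le) hα.le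
      rwa [one_mul] at h
    have key : ∀ u v : ℝ, 0 ≤ v → u ≤ coef * v + ε * α * N →
        u / N ≤ (1 + C * ε) * Real.exp (3 * ε) * (v / N) + C * ε * α := by
      intro u v hv huv
      have d1 : u / N ≤ (coef * v + ε * α * N) / N :=
        div_le_div_of_nonneg_right huv hNpos.le
      have hsplit : (coef * v + ε * α * N) / N = coef * (v / N) + ε * α := by
        rw [add_div, mul_div_assoc, mul_div_assoc, div_self hNpos.ne', mul_one]
      have d2 : coef * (v / N) ≤ (1 + C * ε) * Real.exp (3 * ε) * (v / N) :=
        mul_le_mul_of_nonneg_right hcoefle (div_nonneg hv hNpos.le)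
      rw [hsplit] at d1
      linarith
    constructor
    · rw [havgS, havgS']
      exact key A A' hA'0 M1
    · rw [havgS, havgS']
      have e1 : 1 - A / N = B / N := by
        rw [hBeq, sub_div, div_self hNpos.ne']
      have e2 : 1 - A' / N = B' / N := by
        rw [hB'eq, sub_div, div_self hNpos.ne']
      rw [e1, e2]
      exact key B B' hB'0 M2
  · -- H empty
    have hFempty : ∀ (z : Fin n → X) (I : Finset (Fin n)), I ∈ P → Pat z I = ∅ := by
      intro z I hI
      apply Finset.eq_empty_of_forall_notMem
      intro f hf
      exact hHne ⟨f, (hPat z I (hcard I hI)).1 f hf⟩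
    have hz0 : ∀ (T : Fin n → X × Bool) (z : Fin n → X) (I : Finset (Fin n)), I ∈ P →
        EPred η φ T (Pat z I) x = 0 := by
      intro T z I hI
      rw [hFempty z I hI]
      simp [EPred]
    have hz : ∀ (T : Fin n → X × Bool) (z : Fin n → X),
        (∑ I ∈ P, EPred η φ T (Pat z I) x) / (n.choose n' : ℝ) = 0 := by
      intro T z
      rw [Finset.sum_eq_zero (fun I hI => hz0 T z I hI), zero_div]
    have hCε : (0:ℝ) ≤ C * ε := mul_nonneg (zero_le_one.trans hC1) hε.le
    have hCεα : (0:ℝ) ≤ C * ε * α := mul_nonneg hCε hα.le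
    have hcoef1 : (1:ℝ) ≤ (1 + C * ε) * Real.exp (3 * ε) := by
      have h1 : (1:ℝ) ≤ 1 + C * ε := le_add_of_nonneg_right hCε
      calc (1:ℝ) ≤ 1 + C * ε := h1
        _ = (1 + C * ε) * 1 := (mul_one _).symm
        _ ≤ (1 + C * ε) * Real.exp (3 * ε) :=
            mul_le_mul_of_nonneg_left hexp3 (zero_le_one.trans h1)
    constructor
    · rw [havgS, havgS', hz S, hz S']
      rw [mul_zero, zero_add]
      exact hCεα
    · rw [havgS, havgS', hz S, hz S']
      rw [sub_zero, mul_one]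
      linarith [hcoef1, hCεα]
end

section
/- Let H be a hypothesis class on X, n' ≤ n positive integers, η > 0, α ∈ (0,1), D a probability distribution on X×{0,1}, S a dataset of size n, and φ a map from datasets of size n to randomized binary predictors. Assume: (a) |L_D(h) − L_S(h)| ≤ α for every h ∈ H; (b) L_D(φ_S(h)) ≤ L_D(h) + α for every h ∈ H; (c) η·(ln|H_{S_I}| + 1) ≤ α for every subset I ⊆ [n] of size n'; (d) with probability at least 1 − α over a uniformly random subset I ⊆ [n] of size n', min_{h ∈ H_{S_I}} L_S(h) ≤ inf_{h∈H} L_S(h) + α. Then L_D(h_S) ≤ inf_{h∈H} L_D(h) + 6α. -/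
open Finset MeasureTheory
open scoped Classical

variable {X : Type*}

set_option maxHeartbeats 1000000 in
private lemma exp_bound_aux {η s : ℝ} (hη : 0 < η) :
    s * Real.exp (-s / η) ≤ η * Real.exp (-1) := by
  have h2 : s / η ≤ Real.exp (s / η - 1) := by
    have := Real.add_one_le_exp (s / η - 1); linarith
  have h5 : s ≤ η * Real.exp (s / η - 1) := by
    have := mul_le_mul_of_nonneg_left h2 hη.le
    calc s = η * (s / η) := by field_simp
    _ ≤ η * Real.exp (s / η - 1) := this
  have hpos : 0 < Real.exp (-s / η) := Real.exp_pos _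
  calc s * Real.exp (-s/η) ≤ η * Real.exp (s/η - 1) * Real.exp (-s/η) :=
        mul_le_mul_of_nonneg_right h5 hpos.le
  _ = η * Real.exp (-1) := by
      rw [mul_assoc, ← Real.exp_add]; ring_nf

set_option maxHeartbeats 1000000 in
private lemma expmech_core {ι : Type*} (s : Finset ι) (hne : s.Nonempty) (a : ι → ℝ)
    {η : ℝ} (hη : 0 < η) :
    ∑ i ∈ s, Real.exp (-a i / η) * a i
      ≤ (η * Real.log s.card) * (∑ i ∈ s, Real.exp (-a i / η)) + η := by
  have hcard : (1 : ℝ) ≤ (s.card : ℝ) := by exact_mod_cast hne.card_pos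
  have hcpos : (0:ℝ) < s.card := by linarith
  have htnn : 0 ≤ η * Real.log s.card := mul_nonneg hη.le (Real.log_nonneg hcard)
  have hsplit : ∀ i ∈ s, Real.exp (-a i / η) * a i
      = Real.exp (-a i / η) * min (a i) (η * Real.log s.card)
        + Real.exp (-a i / η) * (a i - min (a i) (η * Real.log s.card)) := by
    intro i _; ring
  rw [Finset.sum_congr rfl hsplit, Finset.sum_add_distrib]
  have h1 : ∑ i ∈ s, Real.exp (-a i / η) * min (a i) (η * Real.log s.card)
      ≤ (η * Real.log s.card) * (∑ i ∈ s, Real.exp (-a i / η)) := by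
    rw [Finset.mul_sum]
    refine Finset.sum_le_sum fun i _ => ?_
    rw [mul_comm (η * Real.log s.card)]
    exact mul_le_mul_of_nonneg_left (min_le_right _ _) (Real.exp_pos _).le
  have h2 : ∑ i ∈ s, Real.exp (-a i / η) * (a i - min (a i) (η * Real.log s.card)) ≤ η := by
    have hper : ∀ i ∈ s, Real.exp (-a i / η) * (a i - min (a i) (η * Real.log s.card))
        ≤ η * Real.exp (-1) / s.card := by
      intro i hi
      rcases le_or_gt (a i) (η * Real.log s.card) with hle | hlt
      · rw [min_eq_left hle]; simp only [sub_self, mul_zero]; positivity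
      · rw [min_eq_right hlt.le]
        have hfi : Real.exp (-a i / η)
            = Real.exp (-(a i - η * Real.log s.card) / η)
              * Real.exp (-(η * Real.log s.card) / η) := by
          rw [← Real.exp_add]; congr 1; field_simp; ring
        have het : Real.exp (-(η * Real.log s.card) / η) = 1 / (s.card : ℝ) := by
          have h3 : -(η * Real.log s.card) / η = -Real.log s.card := by field_simp
          rw [h3, Real.exp_neg, Real.exp_log hcpos, one_div]
        have key : (a i - η * Real.log s.card)
              * Real.exp (-(a i - η * Real.log s.card) / η)
            ≤ η * Real.exp (-1) := exp_bound_aux hη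
        calc Real.exp (-a i / η) * (a i - η * Real.log s.card)
            = ((a i - η * Real.log s.card) * Real.exp (-(a i - η * Real.log s.card) / η))
              * Real.exp (-(η * Real.log s.card) / η) := by rw [hfi]; ring
        _ ≤ (η * Real.exp (-1)) * Real.exp (-(η * Real.log s.card) / η) :=
            mul_le_mul_of_nonneg_right key (Real.exp_pos _).le
        _ = η * Real.exp (-1) / s.card := by rw [het]; ring
    calc ∑ i ∈ s, Real.exp (-a i / η) * (a i - min (a i) (η * Real.log s.card))
        ≤ ∑ _i ∈ s, η * Real.exp (-1) / s.card := Finset.sum_le_sum hper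
    _ = s.card * (η * Real.exp (-1) / s.card) := by rw [Finset.sum_const]; ring
    _ = η * Real.exp (-1) := by field_simp
    _ ≤ η * 1 := mul_le_mul_of_nonneg_left (Real.exp_le_one_iff.mpr (by norm_num)) hη.le
    _ = η := mul_one η
  linarith

set_option maxHeartbeats 1000000 in
private lemma expmech {ι : Type*} (s : Finset ι) (hne : s.Nonempty) (f : ι → ℝ)
    {η : ℝ} (hη : 0 < η) :
    (∑ i ∈ s, Real.exp (-(f i) / η) * f i) / (∑ i ∈ s, Real.exp (-(f i) / η))
      ≤ s.inf' hne f + η * (Real.log s.card + 1) := by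
  obtain ⟨i0, hi0, hmin⟩ := s.exists_mem_eq_inf' hne f
  have hfac : ∀ i, Real.exp (-(f i) / η)
      = Real.exp (-(s.inf' hne f) / η) * Real.exp (-(f i - s.inf' hne f) / η) := by
    intro i; rw [← Real.exp_add]; congr 1; field_simp; ring
  have hZ'1 : (1:ℝ) ≤ ∑ i ∈ s, Real.exp (-(f i - s.inf' hne f) / η) := by
    have h0 : Real.exp (-(f i0 - s.inf' hne f) / η) = 1 := by
      rw [← hmin]; simp
    calc (1:ℝ) = Real.exp (-(f i0 - s.inf' hne f) / η) := h0.symm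
    _ ≤ _ := Finset.single_le_sum
        (f := fun i => Real.exp (-(f i - s.inf' hne f) / η))
        (fun i _ => (Real.exp_pos _).le) hi0
  have hZ'pos : (0:ℝ) < ∑ i ∈ s, Real.exp (-(f i - s.inf' hne f) / η) :=
    lt_of_lt_of_le one_pos hZ'1
  have hcore := expmech_core s hne (fun i => f i - s.inf' hne f) hη
  have hZ : (∑ i ∈ s, Real.exp (-(f i) / η))
      = Real.exp (-(s.inf' hne f)/η) * ∑ i ∈ s, Real.exp (-(f i - s.inf' hne f) / η) := by
    rw [Finset.mul_sum]; exact Finset.sum_congr rfl fun i _ => hfac i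
  have hN : (∑ i ∈ s, Real.exp (-(f i) / η) * f i)
      = Real.exp (-(s.inf' hne f)/η) *
        (s.inf' hne f * (∑ i ∈ s, Real.exp (-(f i - s.inf' hne f) / η))
          + ∑ i ∈ s, Real.exp (-(f i - s.inf' hne f) / η) * (f i - s.inf' hne f)) := by
    rw [mul_add, ← mul_assoc, Finset.mul_sum, Finset.mul_sum, ← Finset.sum_add_distrib]
    refine Finset.sum_congr rfl fun i _ => ?_
    rw [hfac i]; ring
  rw [hN, hZ, mul_comm (Real.exp _), mul_comm (Real.exp _),
    mul_div_mul_right _ _ (Real.exp_pos _).ne']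
  rw [div_le_iff₀ hZ'pos]
  have hηZ : η ≤ η * ∑ i ∈ s, Real.exp (-(f i - s.inf' hne f) / η) :=
    le_mul_of_one_le_right hη.le hZ'1
  have htnn : 0 ≤ η * Real.log s.card :=
    mul_nonneg hη.le (Real.log_nonneg (by exact_mod_cast hne.card_pos))
  nlinarith [hcore, hZ'1]

private lemma meas_absdiff [MeasurableSpace X] {p : X → ℝ} (hm : Measurable p) :
    Measurable (fun z : X × Bool => |p z.1 - (if z.2 then (1:ℝ) else 0)|) := by
  have hb : Measurable (fun z : X × Bool => (if z.2 then (1:ℝ) else 0)) :=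
    (Measurable.of_discrete (f := fun b : Bool => (if b then (1:ℝ) else 0))).comp measurable_snd
  exact ((hm.comp measurable_fst).sub hb).abs

private lemma integrable_absdiff [MeasurableSpace X] (D : Measure (X × Bool))
    [IsProbabilityMeasure D] {p : X → ℝ} (hm : Measurable p)
    (h01 : ∀ x, p x ∈ Set.Icc (0:ℝ) 1) :
    Integrable (fun z : X × Bool => |p z.1 - (if z.2 then (1:ℝ) else 0)|) D := by
  refine (integrable_const (1:ℝ)).mono' (meas_absdiff hm).aestronglyMeasurable
    (ae_of_all _ fun z => ?_)
  rw [Real.norm_eq_abs, abs_abs]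
  rcases (h01 z.1) with ⟨h0, h1⟩
  by_cases hz : z.2 <;> simp [hz, abs_le] <;> constructor <;> linarith

private lemma predPopLoss_mem [MeasurableSpace X] (D : Measure (X × Bool))
    [IsProbabilityMeasure D] {p : X → ℝ} (hm : Measurable p)
    (h01 : ∀ x, p x ∈ Set.Icc (0:ℝ) 1) :
    predPopLoss D p ∈ Set.Icc (0:ℝ) 1 := by
  constructor
  · exact integral_nonneg fun z => abs_nonneg _
  · have h := integral_mono (integrable_absdiff D hm h01) (integrable_const (1:ℝ))
      (fun z => by
        rcases (h01 z.1) with ⟨h0, h1⟩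
        by_cases hz : z.2 <;> simp [hz, abs_le] <;> constructor <;> linarith)
    simpa [predPopLoss] using h

set_option maxHeartbeats 1000000 in
private lemma predPopLoss_mix [MeasurableSpace X] (D : Measure (X × Bool))
    [IsProbabilityMeasure D] {ι : Type*} (s : Finset ι) (w : ι → ℝ) (p : ι → X → ℝ)
    (hw : ∀ i ∈ s, 0 ≤ w i) (hw1 : ∑ i ∈ s, w i = 1)
    (hp : ∀ i ∈ s, Measurable (p i)) (hp01 : ∀ i ∈ s, ∀ x, p i x ∈ Set.Icc (0:ℝ) 1) :
    predPopLoss D (fun x => ∑ i ∈ s, w i * p i x)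
      = ∑ i ∈ s, w i * predPopLoss D (p i) := by
  have hpw : ∀ z : X × Bool, |(∑ i ∈ s, w i * p i z.1) - (if z.2 then (1:ℝ) else 0)|
      = ∑ i ∈ s, w i * |p i z.1 - (if z.2 then (1:ℝ) else 0)| := by
    intro z
    have hs0 : 0 ≤ ∑ i ∈ s, w i * p i z.1 :=
      Finset.sum_nonneg fun i hi => mul_nonneg (hw i hi) (hp01 i hi z.1).1
    have hs1 : ∑ i ∈ s, w i * p i z.1 ≤ 1 := by
      calc ∑ i ∈ s, w i * p i z.1 ≤ ∑ i ∈ s, w i :=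
          Finset.sum_le_sum fun i hi =>
            mul_le_of_le_one_right (hw i hi) (hp01 i hi z.1).2
      _ = 1 := hw1
    by_cases hz : z.2
    · simp only [hz, if_true]
      have : ∀ i ∈ s, w i * |p i z.1 - 1| = w i * (1 - p i z.1) := by
        intro i hi
        rw [abs_of_nonpos (by linarith [(hp01 i hi z.1).2]), neg_sub]
      rw [Finset.sum_congr rfl this, abs_of_nonpos (by linarith), neg_sub]
      rw [Finset.sum_congr rfl (fun i (hi : i ∈ s) => mul_sub (w i) 1 (p i z.1)),
        Finset.sum_sub_distrib]
      simp [hw1]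
    · simp only [hz, Bool.false_eq_true, if_false, sub_zero]
      rw [abs_of_nonneg hs0]
      exact Finset.sum_congr rfl fun i hi => by
        rw [abs_of_nonneg (hp01 i hi z.1).1]
  unfold predPopLoss
  rw [integral_congr_ae (ae_of_all _ hpw)]
  rw [integral_finset_sum s (fun i hi =>
    ((integrable_absdiff D (hp i hi) (hp01 i hi)).const_mul (w i)))]
  exact Finset.sum_congr rfl fun i hi => by rw [integral_const_mul]

/-- Lemma (accuracy): under (a) uniform convergence on `S`, (b) accuracy of the realizable
learner `φ`, (c) accuracy of the exponential mechanism, and (d) the sub-sampled pattern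
classes containing an `α`-optimal hypothesis with probability `1 - α`, the predictor `h_S`
satisfies `L_D(h_S) ≤ inf_{h ∈ H} L_D(h) + 6α`. -/
theorem stmt2 {X : Type*} [MeasurableSpace X] (H : Set (X → Bool)) (hH : H.Nonempty)
    (n n' : ℕ) (hn'pos : 0 < n') (hn'n : n' ≤ n)
    (η α : ℝ) (hη : 0 < η) (hα : α ∈ Set.Ioo (0:ℝ) 1)
    (D : Measure (X × Bool)) [IsProbabilityMeasure D]
    (S : Fin n → X × Bool)
    (φ : (Fin n → X × Bool) → X → ℝ)
    (hφrange : ∀ T x, φ T x ∈ Set.Icc (0:ℝ) 1)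
    (hφmeas : ∀ T, Measurable (φ T))
    (Pat : Finset (Fin n) → Finset (X → Bool))
    (hPat : ∀ I : Finset (Fin n), I.card = n' →
      IsPatternClass H (fun i => (S i).1) I (Pat I))
    (ha : ∀ h ∈ H, |popLoss D h - empLoss S h| ≤ α)
    (hb : ∀ h ∈ H,
      predPopLoss D (φ fun i => ((S i).1, h ((S i).1))) ≤ popLoss D h + α)
    (hc : ∀ I : Finset (Fin n), I.card = n' → η * (Real.log (Pat I).card + 1) ≤ α)
    (hd : ((((univ : Finset (Fin n)).powersetCard n').filter fun I =>
          ∃ h ∈ Pat I, empLoss S h ≤ sInf (empLoss S '' H) + α).card : ℝ)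
        ≥ (1 - α) * (n.choose n')) :
    predPopLoss D (avgPred n' η φ S Pat) ≤ sInf (popLoss D '' H) + 6 * α := by
  obtain ⟨hα0, hα1⟩ := hα
  have hCpos : (0:ℝ) < (n.choose n' : ℝ) := by exact_mod_cast Nat.choose_pos hn'n
  have hcardpc : (((univ : Finset (Fin n)).powersetCard n').card : ℝ) = (n.choose n' : ℝ) := by
    rw [Finset.card_powersetCard, Finset.card_univ, Fintype.card_fin]
  have hIcard : ∀ I ∈ (univ : Finset (Fin n)).powersetCard n', I.card = n' :=
    fun I hI => (Finset.mem_powersetCard.mp hI).2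
  have hPne : ∀ I ∈ (univ : Finset (Fin n)).powersetCard n', (Pat I).Nonempty := by
    intro I hI
    obtain ⟨h0, hh0⟩ := hH
    obtain ⟨f, hf, -⟩ := (hPat I (hIcard I hI)).2.1 h0 hh0
    exact ⟨f, hf⟩
  have hexp_meas : ∀ F : Finset (X → Bool), Measurable (expPred η φ S F) := by
    intro F
    unfold expPred
    exact (Finset.measurable_sum _ fun h _ => ((hφmeas _).const_mul _)).div_const _
  have hexp_range : ∀ F : Finset (X → Bool), ∀ x, expPred η φ S F x ∈ Set.Icc (0:ℝ) 1 := by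
    intro F x
    rcases F.eq_empty_or_nonempty with rfl | hF
    · simp [expPred]
    have hZpos : 0 < ∑ g ∈ F, Real.exp (-(empLoss S g) / η) :=
      Finset.sum_pos (fun _ _ => Real.exp_pos _) hF
    unfold expPred
    constructor
    · exact div_nonneg (Finset.sum_nonneg fun h _ =>
        mul_nonneg (Real.exp_pos _).le (hφrange _ x).1) hZpos.le
    · rw [div_le_one hZpos]
      exact Finset.sum_le_sum fun h _ =>
        mul_le_of_le_one_right (Real.exp_pos _).le (hφrange _ x).2
  have hemp_nonneg : ∀ h : X → Bool, 0 ≤ empLoss S h := fun h => by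
    unfold empLoss; positivity
  have hbdd : BddBelow (empLoss S '' H) :=
    ⟨0, by rintro b ⟨h, -, rfl⟩; exact hemp_nonneg h⟩
  have hMe : sInf (empLoss S '' H) ≤ sInf (popLoss D '' H) + α := by
    rw [← sub_le_iff_le_add]
    refine le_csInf (hH.image _) ?_
    rintro b ⟨h, hh, rfl⟩
    have h1 : sInf (empLoss S '' H) ≤ empLoss S h := csInf_le hbdd ⟨h, hh, rfl⟩
    have h2 := (abs_le.mp (ha h hh)).1
    linarith
  have hMnn : 0 ≤ sInf (popLoss D '' H) := by
    apply Real.sInf_nonneg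
    rintro b ⟨h, -, rfl⟩
    exact ENNReal.toReal_nonneg
  have hkey : ∀ I, ∀ hI : I ∈ (univ : Finset (Fin n)).powersetCard n',
      predPopLoss D (expPred η φ S (Pat I))
        ≤ (Pat I).inf' (hPne I hI) (empLoss S) + 3 * α := by
    intro I hI
    have hF := hPne I hI
    have hZpos : 0 < ∑ g ∈ Pat I, Real.exp (-(empLoss S g) / η) :=
      Finset.sum_pos (fun _ _ => Real.exp_pos _) hF
    have hw1 : ∑ h ∈ Pat I, Real.exp (-(empLoss S h) / η)
        / (∑ g ∈ Pat I, Real.exp (-(empLoss S g) / η)) = 1 := by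
      rw [← Finset.sum_div, div_self hZpos.ne']
    have heq : expPred η φ S (Pat I)
        = fun x => ∑ h ∈ Pat I, (Real.exp (-(empLoss S h) / η)
            / (∑ g ∈ Pat I, Real.exp (-(empLoss S g) / η)))
              * φ (fun i => ((S i).1, h ((S i).1))) x := by
      funext x; unfold expPred; rw [Finset.sum_div]
      exact Finset.sum_congr rfl fun h _ => by ring
    rw [heq, predPopLoss_mix D _ _ _ (fun h _ => by positivity) hw1
      (fun h _ => hφmeas _) (fun h _ x => hφrange _ x)]
    have hHmem : ∀ h ∈ Pat I, h ∈ H := (hPat I (hIcard I hI)).1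
    have step1 : ∑ h ∈ Pat I, (Real.exp (-(empLoss S h) / η)
          / (∑ g ∈ Pat I, Real.exp (-(empLoss S g) / η)))
            * predPopLoss D (φ fun i => ((S i).1, h ((S i).1)))
        ≤ ∑ h ∈ Pat I, (Real.exp (-(empLoss S h) / η)
          / (∑ g ∈ Pat I, Real.exp (-(empLoss S g) / η))) * (empLoss S h + 2 * α) := by
      refine Finset.sum_le_sum fun h hh => ?_
      have hhH := hHmem h hh
      have h1 := hb h hhH
      have h2 := (abs_le.mp (ha h hhH)).2
      have hwn : 0 ≤ Real.exp (-(empLoss S h) / η)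
          / (∑ g ∈ Pat I, Real.exp (-(empLoss S g) / η)) := by positivity
      apply mul_le_mul_of_nonneg_left _ hwn
      linarith
    have step2 : ∑ h ∈ Pat I, (Real.exp (-(empLoss S h) / η)
          / (∑ g ∈ Pat I, Real.exp (-(empLoss S g) / η))) * (empLoss S h + 2 * α)
        = (∑ h ∈ Pat I, Real.exp (-(empLoss S h) / η) * empLoss S h)
            / (∑ g ∈ Pat I, Real.exp (-(empLoss S g) / η)) + 2 * α := by
      have hterm : ∀ h ∈ Pat I, (Real.exp (-(empLoss S h) / η)
            / (∑ g ∈ Pat I, Real.exp (-(empLoss S g) / η))) * (empLoss S h + 2 * α)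
          = Real.exp (-(empLoss S h) / η) * empLoss S h
              / (∑ g ∈ Pat I, Real.exp (-(empLoss S g) / η))
            + (2 * α) * (Real.exp (-(empLoss S h) / η)
              / (∑ g ∈ Pat I, Real.exp (-(empLoss S g) / η))) := fun h _ => by ring
      rw [Finset.sum_congr rfl hterm, Finset.sum_add_distrib, ← Finset.sum_div,
        ← Finset.mul_sum, hw1, mul_one]
    have step3 := expmech (Pat I) hF (empLoss S) hη
    have hcI := hc I (hIcard I hI)
    linarith
  have hgoodI : ∀ I, ∀ hI : I ∈ (univ : Finset (Fin n)).powersetCard n',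
      (∃ h ∈ Pat I, empLoss S h ≤ sInf (empLoss S '' H) + α) →
      predPopLoss D (expPred η φ S (Pat I)) ≤ sInf (popLoss D '' H) + 5 * α := by
    rintro I hI ⟨h, hh, hle⟩
    have h1 := hkey I hI
    have h2 : (Pat I).inf' (hPne I hI) (empLoss S) ≤ empLoss S h := Finset.inf'_le _ hh
    linarith
  have hallI : ∀ I ∈ (univ : Finset (Fin n)).powersetCard n',
      predPopLoss D (expPred η φ S (Pat I)) ∈ Set.Icc (0:ℝ) 1 :=
    fun I _ => predPopLoss_mem D (hexp_meas _) (hexp_range _)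
  have havg : predPopLoss D (avgPred n' η φ S Pat)
      = ∑ I ∈ (univ : Finset (Fin n)).powersetCard n',
          (1 / (n.choose n' : ℝ)) * predPopLoss D (expPred η φ S (Pat I)) := by
    have heq : avgPred n' η φ S Pat
        = fun x => ∑ I ∈ (univ : Finset (Fin n)).powersetCard n',
            (1 / (n.choose n' : ℝ)) * expPred η φ S (Pat I) x := by
      funext x; unfold avgPred; rw [Finset.sum_div]
      exact Finset.sum_congr rfl fun I _ => by ring
    rw [heq]
    exact predPopLoss_mix D _ _ _ (fun I _ => by positivity)
      (by rw [Finset.sum_const, nsmul_eq_mul, hcardpc]; field_simp)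
      (fun I _ => hexp_meas _) (fun I _ => hexp_range _)
  have hsum : ∑ I ∈ (univ : Finset (Fin n)).powersetCard n',
      predPopLoss D (expPred η φ S (Pat I))
        ≤ (n.choose n' : ℝ) * (sInf (popLoss D '' H) + 6 * α) := by
    have hsplit := Finset.sum_filter_add_sum_filter_not
      ((univ : Finset (Fin n)).powersetCard n')
      (fun I => ∃ h ∈ Pat I, empLoss S h ≤ sInf (empLoss S '' H) + α)
      (fun I => predPopLoss D (expPred η φ S (Pat I)))
    have hGle : ∑ I ∈ ((univ : Finset (Fin n)).powersetCard n').filter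
          (fun I => ∃ h ∈ Pat I, empLoss S h ≤ sInf (empLoss S '' H) + α),
        predPopLoss D (expPred η φ S (Pat I))
        ≤ ((((univ : Finset (Fin n)).powersetCard n').filter
            (fun I => ∃ h ∈ Pat I, empLoss S h ≤ sInf (empLoss S '' H) + α)).card : ℝ)
          * (sInf (popLoss D '' H) + 5 * α) := by
      rw [← nsmul_eq_mul]
      refine Finset.sum_le_card_nsmul _ _ _ fun I hI => ?_
      obtain ⟨hI1, hI2⟩ := Finset.mem_filter.mp hI
      exact hgoodI I hI1 hI2
    have hBle : ∑ I ∈ ((univ : Finset (Fin n)).powersetCard n').filter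
          (fun I => ¬ ∃ h ∈ Pat I, empLoss S h ≤ sInf (empLoss S '' H) + α),
        predPopLoss D (expPred η φ S (Pat I))
        ≤ ((((univ : Finset (Fin n)).powersetCard n').filter
            (fun I => ¬ ∃ h ∈ Pat I, empLoss S h ≤ sInf (empLoss S '' H) + α)).card : ℝ)
          * 1 := by
      rw [← nsmul_eq_mul]
      refine Finset.sum_le_card_nsmul _ _ _ fun I hI => ?_
      exact (hallI I (Finset.mem_filter.mp hI).1).2
    have hcards := Finset.card_filter_add_card_filter_not
      (s := (univ : Finset (Fin n)).powersetCard n')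
      (p := fun I => ∃ h ∈ Pat I, empLoss S h ≤ sInf (empLoss S '' H) + α)
    have hGcard : ((((univ : Finset (Fin n)).powersetCard n').filter
          (fun I => ∃ h ∈ Pat I, empLoss S h ≤ sInf (empLoss S '' H) + α)).card : ℝ)
        ≤ (n.choose n' : ℝ) := by
      rw [← hcardpc]
      exact_mod_cast Finset.card_filter_le _ _
    have hBcard : ((((univ : Finset (Fin n)).powersetCard n').filter
          (fun I => ¬ ∃ h ∈ Pat I, empLoss S h ≤ sInf (empLoss S '' H) + α)).card : ℝ)
        ≤ α * (n.choose n' : ℝ) := by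
      have hc' : ((((univ : Finset (Fin n)).powersetCard n').filter
            (fun I => ∃ h ∈ Pat I, empLoss S h ≤ sInf (empLoss S '' H) + α)).card : ℝ)
          + ((((univ : Finset (Fin n)).powersetCard n').filter
            (fun I => ¬ ∃ h ∈ Pat I, empLoss S h ≤ sInf (empLoss S '' H) + α)).card : ℝ)
          = (n.choose n' : ℝ) := by
        rw [← hcardpc]; exact_mod_cast hcards
      linarith [hd]
    have hM5 : 0 ≤ sInf (popLoss D '' H) + 5 * α := by linarith
    rw [← hsplit]
    have hGle' : ((((univ : Finset (Fin n)).powersetCard n').filter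
          (fun I => ∃ h ∈ Pat I, empLoss S h ≤ sInf (empLoss S '' H) + α)).card : ℝ)
          * (sInf (popLoss D '' H) + 5 * α)
        ≤ (n.choose n' : ℝ) * (sInf (popLoss D '' H) + 5 * α) :=
      mul_le_mul_of_nonneg_right hGcard hM5
    nlinarith
  rw [havg, ← Finset.mul_sum]
  calc (1 / (n.choose n' : ℝ)) * ∑ I ∈ (univ : Finset (Fin n)).powersetCard n',
        predPopLoss D (expPred η φ S (Pat I))
      ≤ (1 / (n.choose n' : ℝ)) * ((n.choose n' : ℝ) * (sInf (popLoss D '' H) + 6 * α)) :=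
        mul_le_mul_of_nonneg_left hsum (by positivity)
  _ = sInf (popLoss D '' H) + 6 * α := by field_simp
end

section
/- Let η > 0 and ε ∈ (0,1] with 1/(ηn) ≤ ε, let φ have 1/(ηn)-differentially-private prediction, and let S = ((x_i,y_i))_{i=1}^n be a dataset. Let I ⊆ [n] with |I| = n' and 1 ∈ I, let i ∈ [n]∖I, and set I' = (I∖{1}) ∪ {i}. If the sequence (x_j)_{j ∈ I∖{1}} is an η-net for H with respect to the uniform distribution on (x_2,…,x_n), then h_{S,S_I} ⪯ 4e⁶·h_{S,S_{I'}}. -/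
open Finset MeasureTheory
open scoped Classical

variable {X : Type*}

lemma card_le_two_of_inj {A : Type*} (s : Finset A) (v : A → Bool)
    (hinj : ∀ a ∈ s, ∀ b ∈ s, v a = v b → a = b) : s.card ≤ 2 := by
  have h := Finset.card_le_card_of_injOn v (fun a _ => Finset.mem_univ (v a))
    (fun a ha b hb hab => hinj a (by simpa using ha) b (by simpa using hb) hab)
  simpa using h

lemma sum_le_two_smul {A : Type*} (F F' : Finset A) (π : A → A)
    (hmap : ∀ a ∈ F, π a ∈ F')
    (hfib : ∀ b ∈ F', (F.filter fun a => π a = b).card ≤ 2)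
    (f g : A → ℝ) (C : ℝ) (hC : 0 ≤ C)
    (hg : ∀ b ∈ F', 0 ≤ g b)
    (hfg : ∀ a ∈ F, f a ≤ C * g (π a)) :
    ∑ a ∈ F, f a ≤ 2 * C * ∑ b ∈ F', g b := by
  have h1 : ∑ a ∈ F, f a ≤ ∑ a ∈ F, C * g (π a) := Finset.sum_le_sum hfg
  have h2 : ∑ a ∈ F, C * g (π a)
      = ∑ b ∈ F', ∑ a ∈ F.filter fun a => π a = b, C * g (π a) :=
    (Finset.sum_fiberwise_of_maps_to hmap _).symm
  have h3 : ∀ b ∈ F', (∑ a ∈ F.filter (fun a => π a = b), C * g (π a)) ≤ 2 * (C * g b) := by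
    intro b hb
    have he : (∑ a ∈ F.filter (fun a => π a = b), C * g (π a))
        = ((F.filter fun a => π a = b).card : ℝ) * (C * g b) := by
      rw [Finset.sum_congr rfl (fun a ha => by rw [(Finset.mem_filter.mp ha).2]),
        Finset.sum_const, nsmul_eq_mul]
    rw [he]
    apply mul_le_mul_of_nonneg_right _ (mul_nonneg hC (hg b hb))
    exact_mod_cast hfib b hb
  have h4 : ∑ b ∈ F', 2 * (C * g b) = 2 * C * ∑ b ∈ F', g b := by
    rw [Finset.mul_sum]; exact Finset.sum_congr rfl (fun b _ => by ring)
  calc ∑ a ∈ F, f a ≤ ∑ b ∈ F', ∑ a ∈ F.filter fun a => π a = b, C * g (π a) := h2 ▸ h1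
    _ ≤ ∑ b ∈ F', 2 * (C * g b) := Finset.sum_le_sum h3
    _ = _ := h4

lemma priv_group {X : Type*} {n : ℕ} {κ : ℝ} (hκ : 0 ≤ κ)
    (φ : (Fin n → X × Bool) → X → ℝ)
    (hφrange : ∀ T x, φ T x ∈ Set.Icc (0:ℝ) 1)
    (hφ : PrivatePrediction κ φ) (D : Finset (Fin n)) :
    ∀ T T' : Fin n → X × Bool, (∀ j, j ∉ D → T j = T' j) → ∀ x,
      φ T x ≤ Real.exp (κ * D.card) * φ T' x ∧
      1 - φ T x ≤ Real.exp (κ * D.card) * (1 - φ T' x) := by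
  induction D using Finset.induction_on with
  | empty =>
      intro T T' hag x
      have hTT : T = T' := funext fun j => hag j (by simp)
      subst hTT; simp
  | @insert a s ha ih =>
      intro T T' hag x
      set T'' := Function.update T a (T' a) with hT''
      have hag' : ∀ j, j ∉ s → T'' j = T' j := by
        intro j hj
        by_cases hja : j = a
        · subst hja; simp [hT'']
        · rw [hT'', Function.update_of_ne hja]
          exact hag j (by simp [hja, hj])
      have IH := ih T'' T' hag' x
      have hcard : κ * ((insert a s).card : ℝ) = κ + κ * (s.card : ℝ) := by
        rw [Finset.card_insert_of_notMem ha]; push_cast; ring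
      have hexp : Real.exp (κ * ((insert a s).card : ℝ))
          = Real.exp κ * Real.exp (κ * s.card) := by
        rw [← Real.exp_add, hcard]
      have hφ1 : (0:ℝ) ≤ φ T' x := (hφrange T' x).1
      have hφ2 : (0:ℝ) ≤ 1 - φ T' x := by linarith [(hφrange T' x).2]
      have h1κ : 1 ≤ Real.exp κ := Real.one_le_exp hκ
      have hesnn : (0:ℝ) < Real.exp (κ * s.card) := Real.exp_pos _
      by_cases hTa : T a = T' a
      · have hTeq : T'' = T := by
          funext j
          by_cases hja : j = a
          · subst hja; simp [hT'', hTa]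
          · simp [hT'', Function.update_of_ne hja]
        rw [hTeq] at IH
        rw [hexp]
        constructor
        · nlinarith [IH.1, mul_nonneg hesnn.le hφ1]
        · nlinarith [IH.2, mul_nonneg hesnn.le hφ2]
      · have hnb : Neighboring T T'' := by
          refine ⟨a, ?_, fun j hj => (Function.update_of_ne hj _ _).symm⟩
          simp [hT'', hTa]
        have HP := hφ T T'' hnb x
        rw [hexp]
        constructor
        · calc φ T x ≤ Real.exp κ * φ T'' x := HP.1
            _ ≤ Real.exp κ * (Real.exp (κ * s.card) * φ T' x) :=
              mul_le_mul_of_nonneg_left IH.1 (Real.exp_pos κ).le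
            _ = Real.exp κ * Real.exp (κ * s.card) * φ T' x := by ring
        · calc 1 - φ T x ≤ Real.exp κ * (1 - φ T'' x) := HP.2
            _ ≤ Real.exp κ * (Real.exp (κ * s.card) * (1 - φ T' x)) :=
              mul_le_mul_of_nonneg_left IH.2 (Real.exp_pos κ).le
            _ = Real.exp κ * Real.exp (κ * s.card) * (1 - φ T' x) := by ring

lemma empLoss_diff {X : Type*} {n : ℕ} (S : Fin n → X × Bool) (h g : X → Bool) :
    empLoss S g ≤ empLoss S h +
      ((univ.filter fun j : Fin n => h (S j).1 ≠ g (S j).1).card : ℝ) / n := by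
  unfold empLoss
  rw [← add_div]
  rcases Nat.eq_zero_or_pos n with hn | hn
  · subst hn; simp
  have hn' : (0:ℝ) < n := by exact_mod_cast hn
  rw [div_le_div_iff_of_pos_right hn']
  have hsub : (univ.filter fun j : Fin n => g (S j).1 ≠ (S j).2) ⊆
      (univ.filter fun j : Fin n => h (S j).1 ≠ (S j).2) ∪
      (univ.filter fun j : Fin n => h (S j).1 ≠ g (S j).1) := by
    intro j hj
    simp only [Finset.mem_filter, Finset.mem_union, Finset.mem_univ, true_and] at hj ⊢
    by_cases he : h (S j).1 = g (S j).1
    · left; rw [he]; exact hj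
    · right; exact he
  have hh := (Finset.card_le_card hsub).trans (Finset.card_union_le _ _)
  exact_mod_cast hh

lemma final_div {N Z N' Z' M M' : ℝ} (hZ : 0 < Z) (hZ' : 0 < Z')
    (hMZ : M = Z - N) (hMZ' : M' = Z' - N')
    (hN' : 0 ≤ N') (hM' : 0 ≤ M')
    (hNum : N ≤ 2 * Real.exp 4 * N') (hM : M ≤ 2 * Real.exp 4 * M')
    (hZle : Z' ≤ 2 * Real.exp 2 * Z) :
    N / Z ≤ 4 * Real.exp 6 * (N' / Z') ∧
    1 - N / Z ≤ 4 * Real.exp 6 * (1 - N' / Z') := by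
  have e6eq : Real.exp 4 * Real.exp 2 = Real.exp 6 := by
    rw [← Real.exp_add]; norm_num
  have main : ∀ A A' : ℝ, 0 ≤ A' → A ≤ 2 * Real.exp 4 * A' →
      A / Z ≤ 4 * Real.exp 6 * (A' / Z') := by
    intro A A' hA' hAle
    have h1 : A * Z' ≤ (2 * Real.exp 4 * A') * Z' :=
      mul_le_mul_of_nonneg_right hAle hZ'.le
    have h2 : (2 * Real.exp 4 * A') * Z' ≤ (2 * Real.exp 4 * A') * (2 * Real.exp 2 * Z) :=
      mul_le_mul_of_nonneg_left hZle
        (mul_nonneg (by positivity) hA')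
    have h3 : (2 * Real.exp 4 * A') * (2 * Real.exp 2 * Z) = 4 * Real.exp 6 * A' * Z := by
      rw [← e6eq]; ring
    have h4 : 4 * Real.exp 6 * (A' / Z') = (4 * Real.exp 6 * A') / Z' := by ring
    rw [h4, div_le_div_iff₀ hZ hZ']
    linarith
  constructor
  · exact main _ _ hN' hNum
  · have e1 : 1 - N / Z = M / Z := by rw [hMZ, sub_div, div_self hZ.ne']
    have e2 : 1 - N' / Z' = M' / Z' := by rw [hMZ', sub_div, div_self hZ'.ne']
    rw [e1, e2]
    exact main _ _ hM' hM

/-- Lemma (swap): if `(x_j)_{j ∈ I∖{1}}` is an `η`-net for `H` with respect to the uniform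
distribution on `(x_2, …, x_n)`, then for `I' = (I∖{1}) ∪ {i}` with `i ∉ I`,
`h_{S,S_I} ⪯ 4e⁶ · h_{S,S_{I'}}`. -/
theorem stmt3 {X : Type*} (H : Set (X → Bool)) (n n' : ℕ) (hn : 0 < n)
    (η ε : ℝ) (hη : 0 < η) (hε : ε ∈ Set.Ioc (0:ℝ) 1) (hεη : 1 / (η * n) ≤ ε)
    (φ : (Fin n → X × Bool) → X → ℝ)
    (hφrange : ∀ T x, φ T x ∈ Set.Icc (0:ℝ) 1)
    (hφ : PrivatePrediction (1 / (η * n)) φ)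
    (S : Fin n → X × Bool)
    (I : Finset (Fin n)) (hI : I.card = n') (h0I : (⟨0, hn⟩ : Fin n) ∈ I)
    (i : Fin n) (hiI : i ∉ I)
    (Pat : Finset (Fin n) → Finset (X → Bool))
    (hPatI : IsPatternClass H (fun j => (S j).1) I (Pat I))
    (hPatI' : IsPatternClass H (fun j => (S j).1)
        (insert i (I.erase ⟨0, hn⟩)) (Pat (insert i (I.erase ⟨0, hn⟩))))
    (hnet : IsNetOn H (fun j => (S j).1) (I.erase ⟨0, hn⟩) η) :
    ∀ x : X,
      expPred η φ S (Pat I) x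
          ≤ 4 * Real.exp 6 * expPred η φ S (Pat (insert i (I.erase ⟨0, hn⟩))) x ∧
      1 - expPred η φ S (Pat I) x
          ≤ 4 * Real.exp 6 *
              (1 - expPred η φ S (Pat (insert i (I.erase ⟨0, hn⟩))) x) := by
  intro x
  obtain ⟨hFsub, hFcov, hFuniq⟩ := hPatI
  obtain ⟨hF'sub, hF'cov, hF'uniq⟩ := hPatI'
  by_cases hHne : H.Nonempty
  swap
  · -- H is empty, so both pattern classes are empty and both predictors are 0
    have hF : Pat I = ∅ :=
      Finset.eq_empty_of_forall_notMem fun f hf => hHne ⟨f, hFsub f hf⟩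
    have hF' : Pat (insert i (I.erase ⟨0, hn⟩)) = ∅ :=
      Finset.eq_empty_of_forall_notMem fun f hf => hHne ⟨f, hF'sub f hf⟩
    have h6 : (1:ℝ) ≤ Real.exp 6 := Real.one_le_exp (by norm_num)
    simp only [expPred, hF, hF', Finset.sum_empty, zero_div]
    constructor
    · nlinarith
    · nlinarith
  obtain ⟨h₀, hh₀⟩ := hHne
  set i0 : Fin n := (⟨0, hn⟩ : Fin n) with hi0
  set I' : Finset (Fin n) := insert i (I.erase i0) with hI'eq
  -- basic numeric facts
  have hnR : (0:ℝ) < n := by exact_mod_cast hn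
  have hηn : (0:ℝ) < η * n := by positivity
  have hκ0 : (0:ℝ) ≤ 1 / (η * n) := by positivity
  have hεle : 1 / (η * n) ≤ 1 := le_trans hεη hε.2
  have hηn1 : (1:ℝ) ≤ η * n := by rwa [div_le_one hηn] at hεle
  -- the disagreement count of two net-close hypotheses is at most 2ηn
  have hDcard : ∀ h ∈ H, ∀ g ∈ H, (∀ j ∈ I.erase i0, h ((S j).1) = g ((S j).1)) →
      (((univ.filter fun j : Fin n => h ((S j).1) ≠ g ((S j).1)).card : ℝ) ≤ 2 * (η * n)) := by
    intro h hh g hg hag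
    have hnet' : ((univ.filter fun j : Fin n =>
        j.val ≠ 0 ∧ h ((S j).1) ≠ g ((S j).1)).card : ℝ) ≤ η * ((n:ℝ) - 1) :=
      hnet h hh g hg hag
    have hsub : (univ.filter fun j : Fin n => h ((S j).1) ≠ g ((S j).1)) ⊆
        insert i0 (univ.filter fun j : Fin n => j.val ≠ 0 ∧ h ((S j).1) ≠ g ((S j).1)) := by
      intro j hj
      simp only [Finset.mem_filter, Finset.mem_univ, true_and] at hj
      by_cases hj0 : (j : ℕ) = 0
      · have : j = i0 := Fin.ext (by simpa using hj0)
        rw [this]; exact Finset.mem_insert_self _ _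
      · exact Finset.mem_insert_of_mem (by simp [hj0, hj])
    have h1 := (Finset.card_le_card hsub).trans (Finset.card_insert_le i0 _)
    have h2 : ((univ.filter fun j : Fin n => h ((S j).1) ≠ g ((S j).1)).card : ℝ)
        ≤ ((univ.filter fun j : Fin n =>
            j.val ≠ 0 ∧ h ((S j).1) ≠ g ((S j).1)).card : ℝ) + 1 := by
      exact_mod_cast h1
    nlinarith [hη.le]
  -- key pointwise comparison along a net-agreement
  have key : ∀ h ∈ H, ∀ g ∈ H, (∀ j ∈ I.erase i0, h ((S j).1) = g ((S j).1)) →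
      Real.exp (-(empLoss S h) / η) ≤ Real.exp 2 * Real.exp (-(empLoss S g) / η) ∧
      φ (fun j => ((S j).1, h ((S j).1))) x
        ≤ Real.exp 2 * φ (fun j => ((S j).1, g ((S j).1))) x ∧
      1 - φ (fun j => ((S j).1, h ((S j).1))) x
        ≤ Real.exp 2 * (1 - φ (fun j => ((S j).1, g ((S j).1))) x) := by
    intro h hh g hg hag
    have hc := hDcard h hh g hg hag
    -- weight comparison
    have hw : Real.exp (-(empLoss S h) / η) ≤ Real.exp 2 * Real.exp (-(empLoss S g) / η) := by
      have hL := empLoss_diff S h g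
      have hc2 : ((univ.filter fun j : Fin n => h ((S j).1) ≠ g ((S j).1)).card : ℝ) / n
          ≤ 2 * η := by
        rw [div_le_iff₀ hnR]; nlinarith
      rw [← Real.exp_add]
      apply Real.exp_le_exp.mpr
      have h5 : empLoss S g / η - empLoss S h / η ≤ 2 := by
        rw [← sub_div, div_le_iff₀ hη]; linarith
      rw [neg_div, neg_div]
      linarith
    -- privacy comparison
    have hpriv := priv_group hκ0 φ hφrange hφ
      (univ.filter fun j : Fin n => h ((S j).1) ≠ g ((S j).1))
      (fun j => ((S j).1, h ((S j).1))) (fun j => ((S j).1, g ((S j).1)))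
      (by
        intro j hj
        simp only [Finset.mem_filter, Finset.mem_univ, true_and, not_not] at hj
        simp only [hj]) x
    have hexple : Real.exp (1 / (η * n) *
        ((univ.filter fun j : Fin n => h ((S j).1) ≠ g ((S j).1)).card : ℝ)) ≤ Real.exp 2 := by
      apply Real.exp_le_exp.mpr
      have hmul := mul_le_mul_of_nonneg_left hc hκ0
      have he : 1 / (η * n) * (2 * (η * n)) = 2 := by field_simp
      linarith
    have hp1 : φ (fun j => ((S j).1, h ((S j).1))) x
        ≤ Real.exp 2 * φ (fun j => ((S j).1, g ((S j).1))) x :=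
      hpriv.1.trans (mul_le_mul_of_nonneg_right hexple
        (hφrange (fun j => ((S j).1, g ((S j).1))) x).1)
    have hp2 : 1 - φ (fun j => ((S j).1, h ((S j).1))) x
        ≤ Real.exp 2 * (1 - φ (fun j => ((S j).1, g ((S j).1))) x) :=
      hpriv.2.trans (mul_le_mul_of_nonneg_right hexple
        (by linarith [(hφrange (fun j => ((S j).1, g ((S j).1))) x).2]))
    exact ⟨hw, hp1, hp2⟩
  -- choose the pattern maps
  have hcov1 : ∀ h : X → Bool, ∃ f : X → Bool,
      h ∈ H → (f ∈ Pat I' ∧ ∀ j ∈ I', f ((S j).1) = h ((S j).1)) := by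
    intro h
    by_cases hh : h ∈ H
    · obtain ⟨f, hf1, hf2⟩ := hF'cov h hh
      exact ⟨f, fun _ => ⟨hf1, hf2⟩⟩
    · exact ⟨h, fun c => absurd c hh⟩
  choose π hπ using hcov1
  have hcov2 : ∀ h : X → Bool, ∃ f : X → Bool,
      h ∈ H → (f ∈ Pat I ∧ ∀ j ∈ I, f ((S j).1) = h ((S j).1)) := by
    intro h
    by_cases hh : h ∈ H
    · obtain ⟨f, hf1, hf2⟩ := hFcov h hh
      exact ⟨f, fun _ => ⟨hf1, hf2⟩⟩
    · exact ⟨h, fun c => absurd c hh⟩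
  choose π' hπ' using hcov2
  have hπmem : ∀ h ∈ Pat I, π h ∈ Pat I' := fun h hh => (hπ h (hFsub h hh)).1
  have hπag : ∀ h ∈ Pat I, ∀ j ∈ I', π h ((S j).1) = h ((S j).1) :=
    fun h hh => (hπ h (hFsub h hh)).2
  have hπ'mem : ∀ h ∈ Pat I', π' h ∈ Pat I := fun h hh => (hπ' h (hF'sub h hh)).1
  have hπ'ag : ∀ h ∈ Pat I', ∀ j ∈ I, π' h ((S j).1) = h ((S j).1) :=
    fun h hh => (hπ' h (hF'sub h hh)).2
  have heI' : I.erase i0 ⊆ I' := by rw [hI'eq]; exact Finset.subset_insert _ _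
  have heI : I.erase i0 ⊆ I := Finset.erase_subset _ _
  have hπag0 : ∀ h ∈ Pat I, ∀ j ∈ I.erase i0, h ((S j).1) = π h ((S j).1) :=
    fun h hh j hj => (hπag h hh j (heI' hj)).symm
  have hπ'ag0 : ∀ h ∈ Pat I', ∀ j ∈ I.erase i0, h ((S j).1) = π' h ((S j).1) :=
    fun h hh j hj => (hπ'ag h hh j (heI hj)).symm
  -- fibers have at most two elements
  have hfib : ∀ b ∈ Pat I', ((Pat I).filter fun a => π a = b).card ≤ 2 := by
    intro b hb
    apply card_le_two_of_inj _ (fun h => h ((S i0).1))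
    intro a ha c hc hac
    obtain ⟨haF, haπ⟩ := Finset.mem_filter.mp ha
    obtain ⟨hcF, hcπ⟩ := Finset.mem_filter.mp hc
    apply hFuniq a haF c hcF
    intro j hj
    by_cases hji0 : j = i0
    · subst hji0; exact hac
    · have hj' : j ∈ I' := heI' (Finset.mem_erase.mpr ⟨hji0, hj⟩)
      have h1 := hπag a haF j hj'
      have h2 := hπag c hcF j hj'
      rw [haπ] at h1
      rw [hcπ] at h2
      rw [← h1, ← h2]
  have hfib' : ∀ b ∈ Pat I, ((Pat I').filter fun a => π' a = b).card ≤ 2 := by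
    intro b hb
    apply card_le_two_of_inj _ (fun h => h ((S i).1))
    intro a ha c hc hac
    obtain ⟨haF, haπ⟩ := Finset.mem_filter.mp ha
    obtain ⟨hcF, hcπ⟩ := Finset.mem_filter.mp hc
    apply hF'uniq a haF c hcF
    intro j hj
    rw [hI'eq] at hj
    rcases Finset.mem_insert.mp hj with hji | hje
    · subst hji; exact hac
    · have hjI : j ∈ I := heI hje
      have h1 := hπ'ag a haF j hjI
      have h2 := hπ'ag c hcF j hjI
      rw [haπ] at h1
      rw [hcπ] at h2
      rw [← h1, ← h2]
  -- exp identities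
  have e4 : Real.exp 2 * Real.exp 2 = Real.exp 4 := by rw [← Real.exp_add]; norm_num
  -- numerator comparison
  have hNum : (∑ h ∈ Pat I,
        Real.exp (-(empLoss S h) / η) * φ (fun j => ((S j).1, h ((S j).1))) x)
      ≤ 2 * Real.exp 4 * ∑ h ∈ Pat I',
        Real.exp (-(empLoss S h) / η) * φ (fun j => ((S j).1, h ((S j).1))) x := by
    apply sum_le_two_smul (Pat I) (Pat I') π hπmem hfib _ _ (Real.exp 4) (Real.exp_pos 4).le
    · intro b hb
      exact mul_nonneg (Real.exp_pos _).le (hφrange _ x).1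
    · intro a ha
      have hk := key a (hFsub a ha) (π a) (hF'sub _ (hπmem a ha)) (hπag0 a ha)
      calc Real.exp (-(empLoss S a) / η) * φ (fun j => ((S j).1, a ((S j).1))) x
          ≤ (Real.exp 2 * Real.exp (-(empLoss S (π a)) / η)) *
            (Real.exp 2 * φ (fun j => ((S j).1, (π a) ((S j).1))) x) :=
            mul_le_mul hk.1 hk.2.1 (hφrange _ x).1 (by positivity)
        _ = Real.exp 4 * (Real.exp (-(empLoss S (π a)) / η) *
            φ (fun j => ((S j).1, (π a) ((S j).1))) x) := by rw [← e4]; ring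
  -- complement numerator comparison
  have hMle : (∑ h ∈ Pat I,
        Real.exp (-(empLoss S h) / η) * (1 - φ (fun j => ((S j).1, h ((S j).1))) x))
      ≤ 2 * Real.exp 4 * ∑ h ∈ Pat I',
        Real.exp (-(empLoss S h) / η) * (1 - φ (fun j => ((S j).1, h ((S j).1))) x) := by
    apply sum_le_two_smul (Pat I) (Pat I') π hπmem hfib _ _ (Real.exp 4) (Real.exp_pos 4).le
    · intro b hb
      exact mul_nonneg (Real.exp_pos _).le (by linarith [(hφrange (fun j => ((S j).1, b ((S j).1))) x).2])
    · intro a ha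
      have hk := key a (hFsub a ha) (π a) (hF'sub _ (hπmem a ha)) (hπag0 a ha)
      calc Real.exp (-(empLoss S a) / η) * (1 - φ (fun j => ((S j).1, a ((S j).1))) x)
          ≤ (Real.exp 2 * Real.exp (-(empLoss S (π a)) / η)) *
            (Real.exp 2 * (1 - φ (fun j => ((S j).1, (π a) ((S j).1))) x)) :=
            mul_le_mul hk.1 hk.2.2
              (by linarith [(hφrange (fun j => ((S j).1, a ((S j).1))) x).2]) (by positivity)
        _ = Real.exp 4 * (Real.exp (-(empLoss S (π a)) / η) *
            (1 - φ (fun j => ((S j).1, (π a) ((S j).1))) x)) := by rw [← e4]; ring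
  -- denominator comparison
  have hZle : (∑ h ∈ Pat I', Real.exp (-(empLoss S h) / η))
      ≤ 2 * Real.exp 2 * ∑ h ∈ Pat I, Real.exp (-(empLoss S h) / η) := by
    apply sum_le_two_smul (Pat I') (Pat I) π' hπ'mem hfib' _ _ (Real.exp 2) (Real.exp_pos 2).le
    · intro b hb
      exact (Real.exp_pos _).le
    · intro a ha
      exact (key a (hF'sub a ha) (π' a) (hFsub _ (hπ'mem a ha)) (hπ'ag0 a ha)).1
  -- positivity of denominators
  obtain ⟨f₀, hf₀, -⟩ := hFcov h₀ hh₀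
  obtain ⟨f₁, hf₁, -⟩ := hF'cov h₀ hh₀
  have hZpos : 0 < ∑ h ∈ Pat I, Real.exp (-(empLoss S h) / η) :=
    Finset.sum_pos (fun h _ => Real.exp_pos _) ⟨f₀, hf₀⟩
  have hZ'pos : 0 < ∑ h ∈ Pat I', Real.exp (-(empLoss S h) / η) :=
    Finset.sum_pos (fun h _ => Real.exp_pos _) ⟨f₁, hf₁⟩
  have hN'nn : 0 ≤ ∑ h ∈ Pat I',
      Real.exp (-(empLoss S h) / η) * φ (fun j => ((S j).1, h ((S j).1))) x :=
    Finset.sum_nonneg fun h _ => mul_nonneg (Real.exp_pos _).le (hφrange _ x).1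
  have hM'nn : 0 ≤ ∑ h ∈ Pat I',
      Real.exp (-(empLoss S h) / η) * (1 - φ (fun j => ((S j).1, h ((S j).1))) x) :=
    Finset.sum_nonneg fun h _ => mul_nonneg (Real.exp_pos _).le
      (by linarith [(hφrange (fun j => ((S j).1, h ((S j).1))) x).2])
  have hMZ : (∑ h ∈ Pat I,
        Real.exp (-(empLoss S h) / η) * (1 - φ (fun j => ((S j).1, h ((S j).1))) x))
      = (∑ h ∈ Pat I, Real.exp (-(empLoss S h) / η)) -
        ∑ h ∈ Pat I, Real.exp (-(empLoss S h) / η) * φ (fun j => ((S j).1, h ((S j).1))) x := by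
    rw [← Finset.sum_sub_distrib]
    exact Finset.sum_congr rfl fun h _ => by ring
  have hMZ' : (∑ h ∈ Pat I',
        Real.exp (-(empLoss S h) / η) * (1 - φ (fun j => ((S j).1, h ((S j).1))) x))
      = (∑ h ∈ Pat I', Real.exp (-(empLoss S h) / η)) -
        ∑ h ∈ Pat I', Real.exp (-(empLoss S h) / η) * φ (fun j => ((S j).1, h ((S j).1))) x := by
    rw [← Finset.sum_sub_distrib]
    exact Finset.sum_congr rfl fun h _ => by ring
  exact final_div hZpos hZ'pos hMZ hMZ' hN'nn hM'nn hNum hMle hZle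
end

section
/- Let T be a finite sequence of points of X and let a, b ∈ X. Let F be a pattern class of H on the sequence T followed by a, and let G be a pattern class of H on the sequence T followed by b. For h ∈ F let P_h = {g ∈ G : g(t) = h(t) for every point t of T}. Then 1 ≤ |P_h| ≤ 2 for every h ∈ F, and every g ∈ G satisfies |{h ∈ F : g ∈ P_h}| ≤ 2. -/
open Finset MeasureTheory
open scoped Classical

variable {X : Type*}

/-- Matching between pattern classes: if `F` is a pattern class of `H` on `T` followed by
`a` and `G` one on `T` followed by `b`, then for every `h ∈ F` the set
`P_h = {g ∈ G : g ≡ h on T}` satisfies `1 ≤ |P_h| ≤ 2`, and every `g ∈ G` belongs to `P_h`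
for at most two `h ∈ F`. -/
theorem stmt5 {X : Type*} (H : Set (X → Bool)) (m : ℕ) (T : Fin m → X) (a b : X)
    (F G : Finset (X → Bool))
    (hF : IsPatternClassSeq H (Fin.snoc T a) F)
    (hG : IsPatternClassSeq H (Fin.snoc T b) G) :
    (∀ h ∈ F,
      1 ≤ (G.filter fun g => ∀ j, g (T j) = h (T j)).card ∧
      (G.filter fun g => ∀ j, g (T j) = h (T j)).card ≤ 2) ∧
    (∀ g ∈ G, (F.filter fun h => ∀ j, g (T j) = h (T j)).card ≤ 2) := by
  have key : ∀ (c : X) (K : Finset (X → Bool)),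
      (∀ f ∈ K, ∀ g ∈ K, (∀ j : Fin (m+1), f ((Fin.snoc T c : Fin (m+1) → X) j) = g ((Fin.snoc T c : Fin (m+1) → X) j)) → f = g) →
      ∀ (p : X → Bool) (s : Finset (X → Bool)),
        s ⊆ K.filter (fun g => ∀ j, g (T j) = p (T j)) → s.card ≤ 2 := by
    intro c K hK p s hs
    have : s.card ≤ (univ : Finset Bool).card := by
      apply Finset.card_le_card_of_injOn (fun g => g c) (fun _ _ => Finset.mem_univ _)
      intro g hg g' hg' hgg'
      have hg2 := hs hg; have hg2' := hs hg'
      rw [Finset.mem_filter] at hg2 hg2'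
      apply hK g hg2.1 g' hg2'.1
      intro j
      refine Fin.lastCases ?_ ?_ j
      · simpa using hgg'
      · intro i; simp [Fin.snoc_castSucc, hg2.2 i, hg2'.2 i]
    simpa using this
  constructor
  · intro h hh
    constructor
    · rw [Nat.one_le_iff_ne_zero, ← Nat.pos_iff_ne_zero, Finset.card_pos]
      obtain ⟨g, hgG, hg⟩ := hG.2.1 h (hF.1 h hh)
      refine ⟨g, Finset.mem_filter.2 ⟨hgG, fun j => ?_⟩⟩
      simpa [Fin.snoc_castSucc] using hg (Fin.castSucc j)
    · exact key b G hG.2.2 h _ (le_refl _)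
  · intro g hg
    have := key a F hF.2.2 g (F.filter fun h => ∀ j, g (T j) = h (T j)) ?_
    · exact this
    · intro f hf; rw [Finset.mem_filter] at hf ⊢
      exact ⟨hf.1, fun j => (hf.2 j).symm⟩
end

section
/- Let η > 0 and ε > 0 with 1/(ηn) ≤ ε, and let φ have 1/(ηn)-differentially-private prediction. Let S and S' be neighboring datasets of size n, and let F ⊆ H be any finite nonempty set of hypotheses. Then h_{S,F} ⪯ e^{3ε}·h_{S',F}. -/
open Finset MeasureTheory
open scoped Classical

variable {X : Type*}

lemma empLoss_sub_le' {X : Type*} {n : ℕ} (hn : 0 < n) (S S' : Fin n → X × Bool)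
    (hSS' : Neighboring S S') (h : X → Bool) :
    empLoss S h - empLoss S' h ≤ 1 / n := by
  obtain ⟨i, -, hj⟩ := hSS'
  have hsub : (univ.filter fun j => h (S j).1 ≠ (S j).2) ⊆
      insert i (univ.filter fun j => h (S' j).1 ≠ (S' j).2) := by
    intro j hjj
    simp only [mem_filter, mem_univ, true_and] at hjj
    by_cases hji : j = i
    · subst hji; exact mem_insert_self _ _
    · refine mem_insert_of_mem ?_
      simp only [mem_filter, mem_univ, true_and]
      rw [← hj j hji]; exact hjj
  have hcard : ((univ.filter fun j => h (S j).1 ≠ (S j).2).card : ℝ) ≤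
      ((univ.filter fun j => h (S' j).1 ≠ (S' j).2).card : ℝ) + 1 := by
    have := Finset.card_le_card hsub
    have h2 := Finset.card_insert_le i (univ.filter fun j => h (S' j).1 ≠ (S' j).2)
    have : (univ.filter fun j => h (S j).1 ≠ (S j).2).card ≤
        (univ.filter fun j => h (S' j).1 ≠ (S' j).2).card + 1 := le_trans this h2
    exact_mod_cast this
  have hnpos : (0:ℝ) < n := by exact_mod_cast hn
  unfold empLoss
  rw [div_sub_div_same, div_le_div_iff₀ hnpos hnpos]
  nlinarith

lemma sum_ratio_le' {α : Type*} (F : Finset α) (hne : F.Nonempty) (a a' q q' : α → ℝ)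
    (c : ℝ) (hc : 1 ≤ c)
    (ha : ∀ h ∈ F, 0 < a h) (ha' : ∀ h ∈ F, 0 < a' h) (hq' : ∀ h ∈ F, 0 ≤ q' h)
    (h1 : ∀ h ∈ F, a h ≤ c * a' h) (h2 : ∀ h ∈ F, q h ≤ c * q' h)
    (h3 : ∀ h ∈ F, a' h ≤ c * a h) :
    (∑ h ∈ F, a h * q h) / (∑ h ∈ F, a h) ≤
      c ^ 3 * ((∑ h ∈ F, a' h * q' h) / (∑ h ∈ F, a' h)) := by
  have hc0 : (0:ℝ) < c := lt_of_lt_of_le one_pos hc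
  have hA : 0 < ∑ h ∈ F, a h := Finset.sum_pos ha hne
  have hA' : 0 < ∑ h ∈ F, a' h := Finset.sum_pos ha' hne
  have hQ' : 0 ≤ ∑ h ∈ F, a' h * q' h :=
    Finset.sum_nonneg fun h hh => mul_nonneg (ha' h hh).le (hq' h hh)
  have hnum : (∑ h ∈ F, a h * q h) ≤ c ^ 2 * ∑ h ∈ F, a' h * q' h := by
    rw [Finset.mul_sum]
    refine Finset.sum_le_sum fun h hh => ?_
    have t1 : a h * q h ≤ a h * (c * q' h) :=
      mul_le_mul_of_nonneg_left (h2 h hh) (ha h hh).le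
    have t2 : a h * (c * q' h) ≤ (c * a' h) * (c * q' h) :=
      mul_le_mul_of_nonneg_right (h1 h hh) (mul_nonneg hc0.le (hq' h hh))
    nlinarith
  have hden : (∑ h ∈ F, a' h) ≤ c * ∑ h ∈ F, a h := by
    rw [Finset.mul_sum]; exact Finset.sum_le_sum h3
  rw [← mul_div_assoc, div_le_div_iff₀ hA hA']
  nlinarith [mul_le_mul_of_nonneg_right hnum hA'.le,
    mul_le_mul_of_nonneg_left hden (mul_nonneg (mul_nonneg hc0.le hc0.le) hQ')]

/-- Lemma (stability in `S`): if `φ` has `1/(ηn)`-differentially-private prediction and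
`1/(ηn) ≤ ε`, then for neighboring datasets `S, S'` and any finite nonempty `F ⊆ H`,
`h_{S,F} ⪯ e^{3ε} · h_{S',F}`. -/
theorem stmt6 {X : Type*} (H : Set (X → Bool)) (n : ℕ) (hn : 0 < n)
    (η ε : ℝ) (hη : 0 < η) (hε : 0 < ε) (hεη : 1 / (η * n) ≤ ε)
    (φ : (Fin n → X × Bool) → X → ℝ)
    (hφrange : ∀ T x, φ T x ∈ Set.Icc (0:ℝ) 1)
    (hφ : PrivatePrediction (1 / (η * n)) φ)
    (S S' : Fin n → X × Bool) (hSS' : Neighboring S S')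
    (F : Finset (X → Bool)) (hFne : F.Nonempty) (hFH : ∀ f ∈ F, f ∈ H) :
    ∀ x : X,
      expPred η φ S F x ≤ Real.exp (3 * ε) * expPred η φ S' F x ∧
      1 - expPred η φ S F x ≤ Real.exp (3 * ε) * (1 - expPred η φ S' F x) := by
  intro x
  set κ : ℝ := 1 / (η * n) with hκdef
  have hnpos : (0:ℝ) < n := by exact_mod_cast hn
  have hκpos : 0 < κ := by positivity
  set c : ℝ := Real.exp κ with hcdef
  have hc1 : 1 ≤ c := Real.one_le_exp hκpos.le
  set a : (X → Bool) → ℝ := fun h => Real.exp (-(empLoss S h) / η) with hadef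
  set a' : (X → Bool) → ℝ := fun h => Real.exp (-(empLoss S' h) / η) with ha'def
  set p : (X → Bool) → ℝ := fun h => φ (fun i => ((S i).1, h ((S i).1))) x with hpdef
  set p' : (X → Bool) → ℝ := fun h => φ (fun i => ((S' i).1, h ((S' i).1))) x with hp'def
  have hκη : κ = (1 / n) / η := by
    rw [hκdef, div_div, mul_comm]
  have hSS'symm : Neighboring S' S := by
    obtain ⟨i, hne, hj⟩ := hSS'
    exact ⟨i, fun hh => hne hh.symm, fun j hji => (hj j hji).symm⟩
  -- weight comparisons
  have expcomp : ∀ (T T' : Fin n → X × Bool), Neighboring T T' → ∀ h : X → Bool,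
      Real.exp (-(empLoss T h) / η) ≤ c * Real.exp (-(empLoss T' h) / η) := by
    intro T T' hTT' h
    rw [hcdef, ← Real.exp_add]
    apply Real.exp_le_exp.mpr
    have hd := empLoss_sub_le' hn T' T (by
      obtain ⟨i, hne, hj⟩ := hTT'
      exact ⟨i, fun hh => hne hh.symm, fun j hji => (hj j hji).symm⟩) h
    rw [hκη]
    have : -(empLoss T h) ≤ 1 / n + -(empLoss T' h) := by linarith
    calc -(empLoss T h) / η ≤ (1 / n + -(empLoss T' h)) / η := by gcongr
      _ = (1/n)/η + -(empLoss T' h) / η := by rw [add_div]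
  have haa' : ∀ h : X → Bool, a h ≤ c * a' h := fun h => expcomp S S' hSS' h
  have ha'a : ∀ h : X → Bool, a' h ≤ c * a h := fun h => expcomp S' S hSS'symm h
  -- predictor comparisons
  have hpp' : ∀ h : X → Bool, p h ≤ c * p' h ∧ 1 - p h ≤ c * (1 - p' h) := by
    intro h
    obtain ⟨i, hne, hj⟩ := hSS'
    by_cases hx : (S i).1 = (S' i).1
    · have heq : (fun j => ((S j).1, h ((S j).1))) = (fun j => ((S' j).1, h ((S' j).1))) := by
        funext j
        by_cases hji : j = i
        · subst hji; rw [hx]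
        · rw [hj j hji]
      have hpe : p h = p' h := congrArg (fun T => φ T x) heq
      have h0 : 0 ≤ p' h := (hφrange _ x).1
      have h1 : p' h ≤ 1 := (hφrange _ x).2
      constructor
      · rw [hpe]; nlinarith
      · rw [hpe]; nlinarith
    · have hN : Neighboring (fun j => ((S j).1, h ((S j).1)))
          (fun j => ((S' j).1, h ((S' j).1))) := by
        refine ⟨i, ?_, fun j hji => ?_⟩
        · intro hcontra
          have h2 := congrArg Prod.fst hcontra
          exact hx h2
        · show ((S j).1, h ((S j).1)) = ((S' j).1, h ((S' j).1))
          rw [hj j hji]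
      exact hφ _ _ hN x
  -- positivity / nonnegativity
  have hapos : ∀ h ∈ F, 0 < a h := fun h _ => Real.exp_pos _
  have ha'pos : ∀ h ∈ F, 0 < a' h := fun h _ => Real.exp_pos _
  have hp'0 : ∀ h ∈ F, 0 ≤ p' h := fun h _ => (hφrange _ x).1
  have hp'1 : ∀ h ∈ F, p' h ≤ 1 := fun h _ => (hφrange _ x).2
  have hc3 : c ^ 3 ≤ Real.exp (3 * ε) := by
    have : c ^ 3 = Real.exp (3 * κ) := by
      rw [hcdef, ← Real.exp_nat_mul]; norm_num
    rw [this]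
    exact Real.exp_le_exp.mpr (by nlinarith)
  have hA : 0 < ∑ h ∈ F, a h := Finset.sum_pos hapos hFne
  have hA' : 0 < ∑ h ∈ F, a' h := Finset.sum_pos ha'pos hFne
  have hexpS : expPred η φ S F x = (∑ h ∈ F, a h * p h) / (∑ h ∈ F, a h) := rfl
  have hexpS' : expPred η φ S' F x = (∑ h ∈ F, a' h * p' h) / (∑ h ∈ F, a' h) := rfl
  constructor
  · have hmain := sum_ratio_le' F hFne a a' p p' c hc1 hapos ha'pos hp'0
      (fun h _ => haa' h) (fun h _ => (hpp' h).1) (fun h _ => ha'a h)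
    rw [hexpS, hexpS']
    refine le_trans hmain ?_
    have hE' : 0 ≤ (∑ h ∈ F, a' h * p' h) / (∑ h ∈ F, a' h) := by
      apply div_nonneg _ hA'.le
      exact Finset.sum_nonneg fun h hh => mul_nonneg (ha'pos h hh).le (hp'0 h hh)
    exact mul_le_mul_of_nonneg_right hc3 hE'
  · have hone : ∀ (b : (X → Bool) → ℝ) (r : (X → Bool) → ℝ),
        0 < (∑ h ∈ F, b h) →
        1 - (∑ h ∈ F, b h * r h) / (∑ h ∈ F, b h) =
          (∑ h ∈ F, b h * (1 - r h)) / (∑ h ∈ F, b h) := by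
      intro b r hb
      have : ∑ h ∈ F, b h * (1 - r h) = (∑ h ∈ F, b h) - ∑ h ∈ F, b h * r h := by
        rw [← Finset.sum_sub_distrib]
        congr 1; funext h; ring
      rw [this, sub_div, div_self hb.ne']
    rw [hexpS, hexpS', hone a p hA, hone a' p' hA']
    have hmain := sum_ratio_le' F hFne a a' (fun h => 1 - p h) (fun h => 1 - p' h) c hc1
      hapos ha'pos (fun h hh => by linarith [hp'1 h hh])
      (fun h _ => haa' h) (fun h _ => (hpp' h).2) (fun h _ => ha'a h)
    refine le_trans hmain ?_
    have hE' : 0 ≤ (∑ h ∈ F, a' h * (1 - p' h)) / (∑ h ∈ F, a' h) := by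
      apply div_nonneg _ hA'.le
      exact Finset.sum_nonneg fun h hh =>
        mul_nonneg (ha'pos h hh).le (by linarith [hp'1 h hh])
    exact mul_le_mul_of_nonneg_right hc3 hE'
end

section
/- Let n' and n be positive integers and ε ∈ (0, 1/2] with n' ≤ εn. Let (p_I) and (q_J) be families of randomized binary predictors indexed by the subsets of [n] of size n', and let 𝓘''' be a set of size-n' subsets of [n], each containing the index 1. Assume that for every I ∈ 𝓘''' and every i ∈ [n]∖I, p_I ⪯ 4e⁶·q_{(I∖{1})∪{i}}. Then for every x ∈ X: (1/(n choose n'))·Σ_{I∈𝓘'''} p_I(x) ≤ 8e⁶·ε·(1/(n choose n'))·Σ_J q_J(x), where the right-hand sum ranges over all size-n' subsets J of [n]; and the same inequality holds with every p_I(x) replaced by 1 − p_I(x) and every q_J(x) replaced by 1 − q_J(x). -/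
open Finset MeasureTheory
open scoped Classical

variable {X : Type*}

lemma key_count {n n' : ℕ} (hn' : 0 < n') (z : Fin n) (C : ℝ) (hC : 0 ≤ C)
    (a b : Finset (Fin n) → ℝ)
    (I3 : Finset (Finset (Fin n)))
    (hI3 : ∀ I ∈ I3, I.card = n' ∧ z ∈ I)
    (hb : ∀ J, 0 ≤ b J)
    (hab : ∀ I ∈ I3, ∀ i, i ∉ I → a I ≤ C * b (insert i (I.erase z))) :
    ((n - n' : ℕ) : ℝ) * ∑ I ∈ I3, a I
      ≤ C * n' * ∑ J ∈ (univ : Finset (Fin n)).powersetCard n', b J := by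
  set T := (univ : Finset (Fin n)).powersetCard n' with hT
  set g : (Σ _ : Finset (Fin n), Fin n) → Finset (Fin n) :=
    fun p => insert p.2 (p.1.erase z) with hg
  set S := I3.sigma (fun I => Iᶜ) with hS
  have hmem : ∀ p ∈ S, g p ∈ T := by
    intro p hp
    rw [hS, Finset.mem_sigma] at hp
    obtain ⟨hI, hi⟩ := hp
    rw [Finset.mem_compl] at hi
    obtain ⟨hcard, hz⟩ := hI3 _ hI
    rw [hT, Finset.mem_powersetCard]
    refine ⟨Finset.subset_univ _, ?_⟩
    rw [hg]
    have : p.2 ∉ p.1.erase z := fun h => hi (Finset.mem_of_mem_erase h)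
    rw [Finset.card_insert_of_notMem this, Finset.card_erase_of_mem hz, hcard]
    omega
  -- identify I from J and i
  have hIdet : ∀ p ∈ S, p.1 = insert z ((g p).erase p.2) := by
    intro p hp
    rw [hS, Finset.mem_sigma] at hp
    obtain ⟨hI, hi⟩ := hp
    rw [Finset.mem_compl] at hi
    obtain ⟨hcard, hz⟩ := hI3 _ hI
    have h1 : p.2 ∉ p.1.erase z := fun h => hi (Finset.mem_of_mem_erase h)
    rw [hg]
    simp only []
    rw [Finset.erase_insert h1, Finset.insert_erase hz]
  have step1 : ((n - n' : ℕ) : ℝ) * ∑ I ∈ I3, a I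
      ≤ ∑ p ∈ S, C * b (g p) := by
    rw [hS, Finset.sum_sigma]
    rw [Finset.mul_sum]
    refine Finset.sum_le_sum ?_
    intro I hI
    obtain ⟨hcard, hz⟩ := hI3 _ hI
    have hcc : (Iᶜ : Finset (Fin n)).card = n - n' := by
      rw [Finset.card_compl, hcard]; simp
    calc ((n - n' : ℕ) : ℝ) * a I = ∑ _i ∈ Iᶜ, a I := by
          rw [Finset.sum_const, nsmul_eq_mul, hcc]
      _ ≤ ∑ i ∈ Iᶜ, C * b (g ⟨I, i⟩) := by
          refine Finset.sum_le_sum ?_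
          intro i hi
          exact hab I hI i (Finset.mem_compl.mp hi)
  have step2 : ∑ p ∈ S, b (g p) ≤ ∑ J ∈ T, (n' : ℝ) * b J := by
    rw [← Finset.sum_fiberwise_of_maps_to hmem (fun p => b (g p))]
    refine Finset.sum_le_sum ?_
    intro J hJ
    have hJcard : J.card = n' := (Finset.mem_powersetCard.mp hJ).2
    have hfib : ((S.filter fun p => g p = J).card : ℝ) ≤ (n' : ℝ) := by
      have : (S.filter fun p => g p = J).card ≤ J.card := by
        apply Finset.card_le_card_of_injOn (fun p => p.2)
        · intro p hp
          rw [Finset.mem_coe, Finset.mem_filter] at hp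
          have := hp.2
          rw [← this, hg]
          exact Finset.mem_insert_self _ _
        · intro p1 h1 p2 h2 heq
          rw [Finset.mem_coe, Finset.mem_filter] at h1 h2
          have e1 := hIdet p1 h1.1
          have e2 := hIdet p2 h2.1
          rw [h1.2] at e1
          rw [h2.2] at e2
          obtain ⟨I1, i1⟩ := p1
          obtain ⟨I2, i2⟩ := p2
          simp only at heq e1 e2 ⊢
          subst heq
          rw [e1, e2]
        
      calc ((S.filter fun p => g p = J).card : ℝ) ≤ (J.card : ℝ) := by exact_mod_cast this
        _ = (n' : ℝ) := by rw [hJcard]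
    calc ∑ p ∈ S.filter (fun p => g p = J), b (g p)
        = ∑ p ∈ S.filter (fun p => g p = J), b J := by
          refine Finset.sum_congr rfl ?_
          intro p hp
          rw [(Finset.mem_filter.mp hp).2]
      _ = ((S.filter fun p => g p = J).card : ℝ) * b J := by
          rw [Finset.sum_const, nsmul_eq_mul]
      _ ≤ (n' : ℝ) * b J := by
          exact mul_le_mul_of_nonneg_right hfib (hb J)
  calc ((n - n' : ℕ) : ℝ) * ∑ I ∈ I3, a I ≤ ∑ p ∈ S, C * b (g p) := step1
    _ = C * ∑ p ∈ S, b (g p) := by rw [Finset.mul_sum]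
    _ ≤ C * ∑ J ∈ T, (n' : ℝ) * b J := by
        exact mul_le_mul_of_nonneg_left step2 hC
    _ = C * n' * ∑ J ∈ T, b J := by rw [← Finset.mul_sum, ← mul_assoc]

/-- Amplification by sub-sampling: if each `p_I` (for `I` in the bad-free family `𝓘'''`,
all of size `n'` and containing the index `1`) is dominated by `4e⁶·q_{(I∖{1})∪{i}}` for
every `i ∉ I`, and `n' ≤ εn` with `ε ≤ 1/2`, then the average of the `p_I` over all
size-`n'` subsets is at most `8e⁶ε` times the average of all the `q_J`. -/
theorem stmt7 {X : Type*} (n n' : ℕ) (hn : 0 < n) (hn' : 0 < n')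
    (ε : ℝ) (hε : ε ∈ Set.Ioc (0:ℝ) (1/2)) (hsub : (n' : ℝ) ≤ ε * n)
    (p q : Finset (Fin n) → X → ℝ)
    (hp : ∀ I x, p I x ∈ Set.Icc (0:ℝ) 1)
    (hq : ∀ J x, q J x ∈ Set.Icc (0:ℝ) 1)
    (I3 : Finset (Finset (Fin n)))
    (hI3 : ∀ I ∈ I3, I.card = n' ∧ (⟨0, hn⟩ : Fin n) ∈ I)
    (hmaj : ∀ I ∈ I3, ∀ i : Fin n, i ∉ I → ∀ x : X,
      p I x ≤ 4 * Real.exp 6 * q (insert i (I.erase ⟨0, hn⟩)) x ∧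
      1 - p I x ≤ 4 * Real.exp 6 * (1 - q (insert i (I.erase ⟨0, hn⟩)) x)) :
    ∀ x : X,
      (1 / (n.choose n' : ℝ)) * ∑ I ∈ I3, p I x
          ≤ 8 * Real.exp 6 * ε * ((1 / (n.choose n' : ℝ)) *
              ∑ J ∈ (univ : Finset (Fin n)).powersetCard n', q J x) ∧
      (1 / (n.choose n' : ℝ)) * ∑ I ∈ I3, (1 - p I x)
          ≤ 8 * Real.exp 6 * ε * ((1 / (n.choose n' : ℝ)) *
              ∑ J ∈ (univ : Finset (Fin n)).powersetCard n', (1 - q J x)) := by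
  intro x
  have hE : (0:ℝ) < Real.exp 6 := Real.exp_pos 6
  have hC : (0:ℝ) ≤ 4 * Real.exp 6 := by positivity
  have hεn : (n':ℝ) ≤ (n:ℝ)/2 := by
    calc (n':ℝ) ≤ ε * n := hsub
      _ ≤ (1/2) * n := by
          exact mul_le_mul_of_nonneg_right hε.2 (Nat.cast_nonneg n)
      _ = (n:ℝ)/2 := by ring
  have hnn : n' ≤ n := by
    have : (n':ℝ) ≤ (n:ℝ) := le_trans hεn (by
      have : (0:ℝ) ≤ (n:ℝ) := Nat.cast_nonneg n
      linarith)
    exact_mod_cast this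
  have hcast : ((n - n' : ℕ) : ℝ) = (n:ℝ) - n' := by
    rw [Nat.cast_sub hnn]
  have hdiffpos : (0:ℝ) < (n:ℝ) - n' := by
    have h1 : (1:ℝ) ≤ (n':ℝ) := by exact_mod_cast hn'
    linarith
  have h2 : (n':ℝ) ≤ 2 * ε * ((n:ℝ) - n') := by
    nlinarith [mul_nonneg (by linarith [hε.2] : (0:ℝ) ≤ 1 - 2*ε)
      (Nat.cast_nonneg n' : (0:ℝ) ≤ (n':ℝ))]
  have hcpos : (0:ℝ) ≤ 1 / (n.choose n' : ℝ) := by positivity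
  have main : ∀ a b : Finset (Fin n) → ℝ, (∀ J, 0 ≤ b J) →
      (∀ I ∈ I3, ∀ i, i ∉ I → a I ≤ 4 * Real.exp 6 * b (insert i (I.erase ⟨0, hn⟩))) →
      ∑ I ∈ I3, a I ≤ 8 * Real.exp 6 * ε *
        ∑ J ∈ (univ : Finset (Fin n)).powersetCard n', b J := by
    intro a b hb hab
    have key := key_count hn' (⟨0, hn⟩ : Fin n) (4 * Real.exp 6) hC a b I3 hI3 hb hab
    rw [hcast] at key
    set Sb := ∑ J ∈ (univ : Finset (Fin n)).powersetCard n', b J with hSb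
    have hSbnn : 0 ≤ Sb := Finset.sum_nonneg fun J _ => hb J
    have step : 4 * Real.exp 6 * n' * Sb ≤ ((n:ℝ) - n') * (8 * Real.exp 6 * ε * Sb) := by
      nlinarith [mul_le_mul_of_nonneg_right h2 hSbnn]
    have := le_trans key step
    exact le_of_mul_le_mul_left this hdiffpos
  constructor
  · have h := main (fun I => p I x) (fun J => q J x)
      (fun J => (hq J x).1) (fun I hI i hi => (hmaj I hI i hi x).1)
    calc (1 / (n.choose n' : ℝ)) * ∑ I ∈ I3, p I x
        ≤ (1 / (n.choose n' : ℝ)) * (8 * Real.exp 6 * ε *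
            ∑ J ∈ (univ : Finset (Fin n)).powersetCard n', q J x) :=
          mul_le_mul_of_nonneg_left h hcpos
      _ = 8 * Real.exp 6 * ε * ((1 / (n.choose n' : ℝ)) *
            ∑ J ∈ (univ : Finset (Fin n)).powersetCard n', q J x) := by ring
  · have h := main (fun I => 1 - p I x) (fun J => 1 - q J x)
      (fun J => sub_nonneg.mpr (hq J x).2) (fun I hI i hi => (hmaj I hI i hi x).2)
    calc (1 / (n.choose n' : ℝ)) * ∑ I ∈ I3, (1 - p I x)
        ≤ (1 / (n.choose n' : ℝ)) * (8 * Real.exp 6 * ε *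
            ∑ J ∈ (univ : Finset (Fin n)).powersetCard n', (1 - q J x)) :=
          mul_le_mul_of_nonneg_left h hcpos
      _ = 8 * Real.exp 6 * ε * ((1 / (n.choose n' : ℝ)) *
            ∑ J ∈ (univ : Finset (Fin n)).powersetCard n', (1 - q J x)) := by ring
end

section
/- Let ε > 0 and α ∈ [0, 1/2], and let p, q ∈ [0,1] satisfy p ≤ e^ε·q + εα and 1 − p ≤ e^ε·(1 − q) + εα. Define p' = (1 − 2α)·p + α and q' = (1 − 2α)·q + α. Then p' ≤ e^ε·q' and 1 − p' ≤ e^ε·(1 − q'). -/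
open Finset MeasureTheory
open scoped Classical

variable {X : Type*}

/-- Randomized response conversion: if `p ≤ e^ε·q + εα` and `1 - p ≤ e^ε·(1 - q) + εα`,
then after flipping the output bit with probability `α` the resulting probabilities
`p' = (1-2α)p + α` and `q' = (1-2α)q + α` satisfy the pure `ε`-DP inequalities. -/
theorem stmt8 (ε α p q : ℝ) (hε : 0 < ε) (hα : α ∈ Set.Icc (0:ℝ) (1/2))
    (hp : p ∈ Set.Icc (0:ℝ) 1) (hq : q ∈ Set.Icc (0:ℝ) 1)
    (h1 : p ≤ Real.exp ε * q + ε * α)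
    (h2 : 1 - p ≤ Real.exp ε * (1 - q) + ε * α) :
    (1 - 2 * α) * p + α ≤ Real.exp ε * ((1 - 2 * α) * q + α) ∧
    1 - ((1 - 2 * α) * p + α) ≤ Real.exp ε * (1 - ((1 - 2 * α) * q + α)) := by
  obtain ⟨hα0, hα2⟩ := hα
  have h12 : (0:ℝ) ≤ 1 - 2*α := by linarith
  have he : 1 + ε ≤ Real.exp ε := by linarith [Real.add_one_le_exp ε]
  constructor
  · nlinarith [mul_le_mul_of_nonneg_left h1 h12, mul_le_mul_of_nonneg_left he hα0,
      mul_nonneg (mul_nonneg hα0 hε.le) hα0]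
  · nlinarith [mul_le_mul_of_nonneg_left h2 h12, mul_le_mul_of_nonneg_left he hα0,
      mul_nonneg (mul_nonneg hα0 hε.le) hα0]
end

section
/- Let F be a finite nonempty set, let L : F → [0,1], let η > 0, and set λ_h = exp(−L(h)/η) for h ∈ F. Then the exponentially weighted average loss satisfies (Σ_{h∈F} λ_h·L(h)) / (Σ_{h∈F} λ_h) ≤ min_{h∈F} L(h) + η·(ln|F| + 1). -/
open Finset MeasureTheory
open scoped Classical

variable {X : Type*}

/-- Accuracy of the exponential mechanism: for losses `L : F → [0,1]` and temperature
`η > 0`, the exponentially weighted average loss exceeds the minimum loss by at most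
`η·(ln|F| + 1)`. -/
theorem stmt12 {α : Type*} (F : Finset α) (hF : F.Nonempty) (L : α → ℝ)
    (hL : ∀ h ∈ F, L h ∈ Set.Icc (0:ℝ) 1) (η : ℝ) (hη : 0 < η) :
    (∑ h ∈ F, Real.exp (-(L h) / η) * L h) / (∑ h ∈ F, Real.exp (-(L h) / η))
      ≤ F.inf' hF L + η * (Real.log F.card + 1) := by
  obtain ⟨h0, hh0, hm0⟩ := F.exists_mem_eq_inf' hF L
  set m := F.inf' hF L with hm
  set c := η * (Real.log F.card + 1) with hc
  have hN1 : (1:ℝ) ≤ (F.card : ℝ) := by exact_mod_cast hF.card_pos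
  have hNpos : (0:ℝ) < (F.card : ℝ) := lt_of_lt_of_le one_pos hN1
  have hlogN : 0 ≤ Real.log F.card := Real.log_nonneg hN1
  have hcη : η ≤ c := by nlinarith
  have hden : 0 < ∑ h ∈ F, Real.exp (-(L h)/η) :=
    Finset.sum_pos (fun h _ => Real.exp_pos _) hF
  rw [div_le_iff₀ hden]
  -- key: x * exp(-x/η) ≤ η * exp(-1)
  have key : ∀ x : ℝ, x * Real.exp (-x/η) ≤ η * Real.exp (-1) := by
    intro x
    have h1 : x/η ≤ Real.exp (x/η - 1) := by
      have := Real.add_one_le_exp (x/η - 1); linarith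
    have h2 : (x/η) * Real.exp (-(x/η)) ≤ Real.exp (-1) := by
      have hp : (0:ℝ) < Real.exp (-(x/η)) := Real.exp_pos _
      calc (x/η) * Real.exp (-(x/η)) ≤ Real.exp (x/η - 1) * Real.exp (-(x/η)) :=
            mul_le_mul_of_nonneg_right h1 hp.le
        _ = Real.exp (-1) := by rw [← Real.exp_add]; ring_nf
    have : η * ((x/η) * Real.exp (-(x/η))) ≤ η * Real.exp (-1) :=
      mul_le_mul_of_nonneg_left h2 hη.le
    calc x * Real.exp (-x/η) = η * ((x/η) * Real.exp (-(x/η))) := by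
          field_simp
      _ ≤ η * Real.exp (-1) := this
  set B : ℝ := Real.exp (-m/η) * (η * Real.exp (-2)) / F.card with hB
  have bound : ∀ h ∈ F, Real.exp (-(L h)/η) * (L h - (m + c)) ≤ B := by
    intro h _
    set y := L h - (m + c) with hy
    have hsplit : Real.exp (-(L h)/η) = Real.exp (-(m+c)/η) * Real.exp (-y/η) := by
      rw [← Real.exp_add]; congr 1; field_simp; ring
    have h1 : y * Real.exp (-y/η) ≤ η * Real.exp (-1) := key y
    have hec : Real.exp (-(m+c)/η) = Real.exp (-m/η) * Real.exp (-1) / F.card := by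
      have : Real.exp (-(m+c)/η) = Real.exp (-m/η) * Real.exp (-c/η) := by
        rw [← Real.exp_add]; congr 1; field_simp; ring
      rw [this]
      have hcη' : -c/η = -(Real.log F.card + 1) := by
        rw [hc]; field_simp
      rw [hcη', neg_add, Real.exp_add, Real.exp_neg, Real.exp_log hNpos]
      field_simp
    calc Real.exp (-(L h)/η) * (L h - (m + c))
        = Real.exp (-(m+c)/η) * (y * Real.exp (-y/η)) := by rw [hsplit]; ring
      _ ≤ Real.exp (-(m+c)/η) * (η * Real.exp (-1)) :=
          mul_le_mul_of_nonneg_left h1 (Real.exp_pos _).le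
      _ = B := by
          rw [hec, hB]
          have : Real.exp (-2:ℝ) = Real.exp (-1) * Real.exp (-1) := by
            rw [← Real.exp_add]; norm_num
          rw [this]; field_simp
  have hsum : ∑ h ∈ F, Real.exp (-(L h)/η) * (L h - (m + c)) ≤ 0 := by
    rw [← Finset.add_sum_erase F _ hh0]
    have ht0 : Real.exp (-(L h0)/η) * (L h0 - (m + c)) = -c * Real.exp (-m/η) := by
      rw [← hm0]; ring
    have herase : ∑ h ∈ F.erase h0, Real.exp (-(L h)/η) * (L h - (m + c))
        ≤ (F.erase h0).card * B := by
      calc ∑ h ∈ F.erase h0, Real.exp (-(L h)/η) * (L h - (m + c))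
          ≤ ∑ _h ∈ F.erase h0, B :=
            Finset.sum_le_sum (fun h hh => bound h (Finset.mem_of_mem_erase hh))
        _ = (F.erase h0).card * B := by rw [Finset.sum_const, nsmul_eq_mul]
    have hBpos : 0 < B := by
      apply div_pos (mul_pos (Real.exp_pos _) (mul_pos hη (Real.exp_pos _))) hNpos
    have hcard : ((F.erase h0).card : ℝ) ≤ F.card := by
      exact_mod_cast Finset.card_le_card (Finset.erase_subset _ _)
    have h3 : ((F.erase h0).card : ℝ) * B ≤ Real.exp (-m/η) * (η * Real.exp (-2)) := by
      rw [hB]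
      calc ((F.erase h0).card : ℝ) * (Real.exp (-m/η) * (η * Real.exp (-2)) / F.card)
          ≤ (F.card : ℝ) * (Real.exp (-m/η) * (η * Real.exp (-2)) / F.card) := by
            apply mul_le_mul_of_nonneg_right hcard
            positivity
        _ = Real.exp (-m/η) * (η * Real.exp (-2)) := by field_simp
    have he2 : Real.exp (-2:ℝ) ≤ 1 := Real.exp_le_one_iff.mpr (by norm_num)
    have hmpos : (0:ℝ) < Real.exp (-m/η) := Real.exp_pos _
    have : Real.exp (-m/η) * (η * Real.exp (-2)) ≤ c * Real.exp (-m/η) := by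
      have : η * Real.exp (-2) ≤ c := by nlinarith [Real.exp_pos (-2:ℝ)]
      nlinarith
    rw [ht0]
    linarith
  have expand : ∑ h ∈ F, Real.exp (-(L h)/η) * (L h - (m + c))
      = (∑ h ∈ F, Real.exp (-(L h)/η) * L h) - (m + c) * ∑ h ∈ F, Real.exp (-(L h)/η) := by
    rw [Finset.mul_sum, ← Finset.sum_sub_distrib]
    congr 1; ext h; ring
  linarith [hsum, expand ▸ hsum]
end

section
/- Let F be a finite nonempty set, η > 0, c ≥ 0, and let L, L' : F → ℝ satisfy |L(h) − L'(h)| ≤ c for every h ∈ F. Then for every h ∈ F: exp(−L(h)/η) / (Σ_{g∈F} exp(−L(g)/η)) ≤ e^{2c/η} · exp(−L'(h)/η) / (Σ_{g∈F} exp(−L'(g)/η)). -/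
open Finset MeasureTheory
open scoped Classical

variable {X : Type*}

/-- Privacy of the exponential mechanism: if two loss functions differ by at most `c`
pointwise, the corresponding normalized exponential weights differ by a multiplicative
factor of at most `e^{2c/η}`. -/
theorem stmt13 {α : Type*} (F : Finset α) (hF : F.Nonempty) (η c : ℝ) (hη : 0 < η)
    (hc : 0 ≤ c) (L L' : α → ℝ) (hLL' : ∀ h ∈ F, |L h - L' h| ≤ c) :
    ∀ h ∈ F,
      Real.exp (-(L h) / η) / (∑ g ∈ F, Real.exp (-(L g) / η))
        ≤ Real.exp (2 * c / η) *
            (Real.exp (-(L' h) / η) / (∑ g ∈ F, Real.exp (-(L' g) / η))) := by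
  intro h hh
  have hsum : ∀ M : α → ℝ, 0 < ∑ g ∈ F, Real.exp (-(M g) / η) := fun M =>
    Finset.sum_pos (fun g _ => Real.exp_pos _) hF
  have he : Real.exp (2 * c / η) = Real.exp (c / η) * Real.exp (c / η) := by
    rw [← Real.exp_add]; ring_nf
  have h1 : Real.exp (-(L h) / η) ≤ Real.exp (c / η) * Real.exp (-(L' h) / η) := by
    rw [← Real.exp_add]
    apply Real.exp_le_exp.2
    have := (abs_le.1 (hLL' h hh)).1
    rw [← add_div]
    exact (div_le_div_iff_of_pos_right hη).2 (by linarith)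
  have h2 : ∑ g ∈ F, Real.exp (-(L' g) / η) ≤ Real.exp (c / η) * ∑ g ∈ F, Real.exp (-(L g) / η) := by
    rw [Finset.mul_sum]
    apply Finset.sum_le_sum
    intro g hg
    rw [← Real.exp_add]
    apply Real.exp_le_exp.2
    have := (abs_le.1 (hLL' g hg)).2
    rw [← add_div]
    exact (div_le_div_iff_of_pos_right hη).2 (by linarith)
  have key : Real.exp (-(L h) / η) * (∑ g ∈ F, Real.exp (-(L' g) / η)) ≤
      Real.exp (2 * c / η) * Real.exp (-(L' h) / η) * ∑ g ∈ F, Real.exp (-(L g) / η) := by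
    calc Real.exp (-(L h) / η) * (∑ g ∈ F, Real.exp (-(L' g) / η))
        ≤ (Real.exp (c / η) * Real.exp (-(L' h) / η)) *
            (Real.exp (c / η) * ∑ g ∈ F, Real.exp (-(L g) / η)) :=
          mul_le_mul h1 h2 (le_of_lt (hsum L')) (by positivity)
      _ = _ := by rw [he]; ring
  rw [div_le_iff₀ (hsum L), ← mul_div_assoc, div_mul_eq_mul_div, le_div_iff₀ (hsum L')]
  exact key
end

section
/- Let S = ((x_i,y_i))_{i=1}^n be a dataset and α ∈ (0,1). Let T be a finite sequence of points of X that is an α-net for H with respect to the uniform distribution on (x_1,…,x_n), and let F be a pattern class of H on T. Then min_{g∈F} L_S(g) ≤ inf_{h∈H} L_S(h) + α. -/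
open Finset MeasureTheory
open scoped Classical

variable {X : Type*}

/-- If `T` is an `α`-net for `H` with respect to the uniform distribution on the points of
`S`, then any pattern class `F` of `H` on `T` contains a hypothesis whose empirical loss
is within `α` of `inf_{h ∈ H} L_S(h)`. -/
theorem stmt14 {X : Type*} (H : Set (X → Bool)) (hH : H.Nonempty)
    (n m : ℕ) (hn : 0 < n) (S : Fin n → X × Bool)
    (α : ℝ) (hα : α ∈ Set.Ioo (0:ℝ) 1)
    (T : Fin m → X) (hnet : IsNetSeqAll H (fun i => (S i).1) T α)
    (F : Finset (X → Bool)) (hF : IsPatternClassSeq H T F) :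
    ∃ g ∈ F, empLoss S g ≤ sInf (empLoss S '' H) + α := by
  obtain ⟨hFH, hFrep, _⟩ := hF
  -- key: for each h ∈ H, some f ∈ F has empLoss S f ≤ empLoss S h + α
  have key : ∀ h ∈ H, ∃ f ∈ F, empLoss S f ≤ empLoss S h + α := by
    intro h hh
    obtain ⟨f, hfF, hagree⟩ := hFrep h hh
    refine ⟨f, hfF, ?_⟩
    have hnetf := hnet f (hFH f hfF) h hh hagree
    have hsub : (univ.filter fun i : Fin n => f (S i).1 ≠ (S i).2) ⊆
        (univ.filter fun i : Fin n => h (S i).1 ≠ (S i).2) ∪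
        (univ.filter fun i : Fin n => f (S i).1 ≠ h (S i).1) := by
      intro i hi
      simp only [mem_filter, mem_union, mem_univ, true_and] at hi ⊢
      by_cases hc : h (S i).1 = (S i).2
      · right; intro hfe; exact hi (hfe.trans hc)
      · left; exact hc
    have hcard : ((univ.filter fun i : Fin n => f (S i).1 ≠ (S i).2).card : ℝ) ≤
        ((univ.filter fun i : Fin n => h (S i).1 ≠ (S i).2).card : ℝ) + α * n := by
      calc ((univ.filter fun i : Fin n => f (S i).1 ≠ (S i).2).card : ℝ)
          ≤ (((univ.filter fun i : Fin n => h (S i).1 ≠ (S i).2) ∪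
            (univ.filter fun i : Fin n => f (S i).1 ≠ h (S i).1)).card : ℝ) := by
            exact_mod_cast Finset.card_le_card hsub
        _ ≤ ((univ.filter fun i : Fin n => h (S i).1 ≠ (S i).2).card : ℝ) +
            ((univ.filter fun i : Fin n => f (S i).1 ≠ h (S i).1).card : ℝ) := by
            exact_mod_cast Finset.card_union_le _ _
        _ ≤ _ := by linarith [hnetf]
    have hn' : (0:ℝ) < n := by exact_mod_cast hn
    unfold empLoss
    rw [div_le_iff₀ hn', add_mul, div_mul_cancel₀ _ (ne_of_gt hn')]
    exact hcard
  -- choose minimizer over F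
  obtain ⟨h0, hh0⟩ := hH
  obtain ⟨f0, hf0F, _⟩ := hFrep h0 hh0
  obtain ⟨g, hgF, hgmin⟩ := F.exists_min_image (empLoss S) ⟨f0, hf0F⟩
  refine ⟨g, hgF, ?_⟩
  have hne : (empLoss S '' H).Nonempty := ⟨empLoss S h0, h0, hh0, rfl⟩
  have : empLoss S g - α ≤ sInf (empLoss S '' H) := by
    apply le_csInf hne
    rintro b ⟨h, hh, rfl⟩
    obtain ⟨f, hfF, hle⟩ := key h hh
    have := hgmin f hfF
    linarith
  linarith
end
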